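/- arXiv:2407.10473 — 7 statements merged into one kernel-verified Lean document; each statement's English description precedes it below -/
import Mathlib

section
/- For quantitative automata A and B (with value functions in {Inf, Sup, LimSup, LimInf}), the relation 'for all words w and all resolvers f of A there exists a resolver g of B with A^f(w) ≤ B^g(w)' holds if and only if trace inclusion holds, i.e., A_sup(w) ≤ B_sup(w) for all infinite words w. -/
open Filter

/-- A quantitative automaton over alphabet `σ` with state type `Q`:
initial state, transition relation (required total), and transition weights. -/
structure QAut (σ : Type) (Q : Type) where
  init : Q
  Δ : Q → σ → Q → Prop
  total : ∀ q a, ∃ q', Δ q a q'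
  μ : Q → σ → Q → ℕ

namespace QAut

variable {σ Q : Type}

/-- The last state of a history (a finite sequence of (letter, state) steps from the
initial state). -/
def hlast (A : QAut σ Q) (h : List (σ × Q)) : Q :=
  (h.getLast?.map Prod.snd).getD A.init

/-- A resolver: maps each history and next letter to a successor state consistent with Δ. -/
structure Resolver (A : QAut σ Q) where
  f : List (σ × Q) → σ → Q
  consistent : ∀ h a, A.Δ (A.hlast h) a (f h a)

/-- The history produced by a resolver on the first `n` letters of a word. -/
def Resolver.hist {A : QAut σ Q} (r : Resolver A) (w : ℕ → σ) : ℕ → List (σ × Q)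
  | 0 => []
  | n + 1 => r.hist w n ++ [(w n, r.f (r.hist w n) (w n))]

/-- The unique run induced by a resolver on a word. -/
def Resolver.run {A : QAut σ Q} (r : Resolver A) (w : ℕ → σ) : ℕ → Q
  | 0 => A.init
  | n + 1 => r.f (r.hist w n) (w n)

/-- The weight sequence of the run induced by a resolver on a word. -/
def Resolver.wt {A : QAut σ Q} (r : Resolver A) (w : ℕ → σ) (n : ℕ) : ℕ :=
  A.μ (r.run w n) (w n) (r.run w (n + 1))

/-- `A^f(w)`: the value (under value function `ν`) of the run induced by resolver `f` on `w`. -/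
noncomputable def val (A : QAut σ Q) (ν : (ℕ → ℕ) → ℝ) (r : Resolver A) (w : ℕ → σ) : ℝ :=
  ν (r.wt w)

/-- `A_sup(w)`: the supremum over all resolvers of `A^f(w)`. -/
noncomputable def supVal (A : QAut σ Q) (ν : (ℕ → ℕ) → ℝ) (w : ℕ → σ) : ℝ :=
  ⨆ r : Resolver A, A.val ν r w

end QAut

/-- The `Inf` value function. -/
noncomputable def vInf (x : ℕ → ℕ) : ℝ := ⨅ n, (x n : ℝ)

/-- The `Sup` value function. -/
noncomputable def vSup (x : ℕ → ℕ) : ℝ := ⨆ n, (x n : ℝ)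

/-- The `LimSup` value function. -/
noncomputable def vLimSup (x : ℕ → ℕ) : ℝ := Filter.limsup (fun n => (x n : ℝ)) Filter.atTop

/-- The `LimInf` value function. -/
noncomputable def vLimInf (x : ℕ → ℕ) : ℝ := Filter.liminf (fun n => (x n : ℝ)) Filter.atTop

/-- `ν ∈ {Inf, Sup, LimSup, LimInf}`. -/
def IsClassic (ν : (ℕ → ℕ) → ℝ) : Prop :=
  ν = vInf ∨ ν = vSup ∨ ν = vLimSup ∨ ν = vLimInf

-- infinite fiber exists
lemma exists_infinite_fiber' {x : ℕ → ℕ} {S : Finset ℕ} (hx : ∀ n, x n ∈ S) :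
    ∃ v ∈ S, {n | x n = v}.Infinite := by
  by_contra h
  push_neg at h
  have hsub : (Set.univ : Set ℕ) ⊆ ⋃ v ∈ S, {n | x n = v} :=
    fun n _ => Set.mem_iUnion₂.2 ⟨x n, hx n, rfl⟩
  have hfin : (⋃ v ∈ S, {n | x n = v}).Finite :=
    Set.Finite.biUnion S.finite_toSet (fun v hv => h v hv)
  exact Set.infinite_univ (hfin.subset hsub)

lemma classic_mem {ν : (ℕ → ℕ) → ℝ} (hν : IsClassic ν) {S : Finset ℕ}
    (x : ℕ → ℕ) (hx : ∀ n, x n ∈ S) : ∃ v ∈ S, ν x = (v : ℝ) := by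
  classical
  have hSne : S.Nonempty := ⟨x 0, hx 0⟩
  -- finite range facts
  have hle : ∀ n, (x n : ℝ) ≤ (S.max' hSne : ℝ) := fun n => by
    exact_mod_cast S.le_max' _ (hx n)
  have hbdd : BddAbove (Set.range fun n => (x n : ℝ)) := ⟨_, by rintro _ ⟨n, rfl⟩; exact hle n⟩
  have hbddb : BddBelow (Set.range fun n => (x n : ℝ)) := ⟨0, by rintro _ ⟨n, rfl⟩; positivity⟩
  have hbu : IsBoundedUnder (· ≤ ·) atTop (fun n => (x n : ℝ)) :=
    Filter.isBoundedUnder_of ⟨_, hle⟩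
  have hbl : IsBoundedUnder (· ≥ ·) atTop (fun n => (x n : ℝ)) :=
    Filter.isBoundedUnder_of ⟨0, fun n => by positivity⟩
  rcases hν with rfl | rfl | rfl | rfl
  · -- vInf
    have hmem : sInf (Set.range x) ∈ Set.range x := Nat.sInf_mem ⟨x 0, 0, rfl⟩
    obtain ⟨n₀, hn₀⟩ := hmem
    refine ⟨x n₀, hx n₀, ?_⟩
    apply le_antisymm
    · exact ciInf_le hbddb n₀
    · refine le_ciInf fun k => ?_
      have : x n₀ ≤ x k := hn₀ ▸ Nat.sInf_le ⟨k, rfl⟩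
      exact_mod_cast this
  · -- vSup
    have hfin : (Set.range x).Finite := S.finite_toSet.subset (by rintro _ ⟨n, rfl⟩; exact hx n)
    have hmem : sSup (Set.range x) ∈ Set.range x :=
      Set.Nonempty.csSup_mem ⟨x 0, 0, rfl⟩ hfin
    obtain ⟨n₀, hn₀⟩ := hmem
    refine ⟨x n₀, hx n₀, ?_⟩
    apply le_antisymm
    · refine ciSup_le fun k => ?_
      have : x k ≤ x n₀ := hn₀ ▸ le_csSup hfin.bddAbove ⟨k, rfl⟩
      exact_mod_cast this
    · exact le_ciSup hbdd n₀
  · -- vLimSup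
    set F' : Finset ℕ := S.filter (fun v => {n | x n = v}.Infinite) with hF'
    obtain ⟨v₀, hv₀S, hv₀⟩ := exists_infinite_fiber' hx
    have hF'ne : F'.Nonempty := ⟨v₀, Finset.mem_filter.2 ⟨hv₀S, hv₀⟩⟩
    set M := F'.max' hF'ne with hM
    have hMmem : M ∈ F' := F'.max'_mem hF'ne
    refine ⟨M, (Finset.mem_filter.1 hMmem).1, ?_⟩
    have hev : ∀ᶠ n in atTop, x n ∈ F' := by
      have : {n | x n ∉ F'}.Finite := by
        have hsub : {n | x n ∉ F'} ⊆ ⋃ v ∈ S \ F', {n | x n = v} := by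
          intro n hn
          exact Set.mem_iUnion₂.2 ⟨x n, Finset.mem_sdiff.2 ⟨hx n, hn⟩, rfl⟩
        refine (Set.Finite.biUnion (S \ F').finite_toSet fun v hv => ?_).subset hsub
        have := (Finset.mem_sdiff.1 hv).2
        simp only [hF', Finset.mem_filter, not_and] at this
        exact Set.not_infinite.1 (this (Finset.mem_sdiff.1 hv).1)
      have := Set.Finite.eventually_cofinite_notMem this
      simpa [Nat.cofinite_eq_atTop] using this
    apply le_antisymm
    · refine limsup_le_of_le hbl.isCoboundedUnder_le ?_
      filter_upwards [hev] with n hn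
      exact_mod_cast F'.le_max' _ hn
    · refine le_limsup_of_frequently_le ?_ hbu
      have hinf : {n | x n = M}.Infinite := (Finset.mem_filter.1 hMmem).2
      have hfr : ∃ᶠ n in atTop, x n = M := Nat.frequently_atTop_iff_infinite.2 hinf
      exact hfr.mono fun n hn => by simp [hn]
  · -- vLimInf
    set F' : Finset ℕ := S.filter (fun v => {n | x n = v}.Infinite) with hF'
    obtain ⟨v₀, hv₀S, hv₀⟩ := exists_infinite_fiber' hx
    have hF'ne : F'.Nonempty := ⟨v₀, Finset.mem_filter.2 ⟨hv₀S, hv₀⟩⟩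
    set m := F'.min' hF'ne with hm
    have hmmem : m ∈ F' := F'.min'_mem hF'ne
    refine ⟨m, (Finset.mem_filter.1 hmmem).1, ?_⟩
    have hev : ∀ᶠ n in atTop, x n ∈ F' := by
      have hfin : {n | x n ∉ F'}.Finite := by
        have hsub : {n | x n ∉ F'} ⊆ ⋃ v ∈ S \ F', {n | x n = v} := by
          intro n hn
          exact Set.mem_iUnion₂.2 ⟨x n, Finset.mem_sdiff.2 ⟨hx n, hn⟩, rfl⟩
        refine (Set.Finite.biUnion (S \ F').finite_toSet fun v hv => ?_).subset hsub
        have h2 := (Finset.mem_sdiff.1 hv).2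
        simp only [hF', Finset.mem_filter, not_and] at h2
        exact Set.not_infinite.1 (h2 (Finset.mem_sdiff.1 hv).1)
      have := Set.Finite.eventually_cofinite_notMem hfin
      simpa [Nat.cofinite_eq_atTop] using this
    apply le_antisymm
    · refine liminf_le_of_frequently_le ?_ hbl
      have hinf : {n | x n = m}.Infinite := (Finset.mem_filter.1 hmmem).2
      have hfr : ∃ᶠ n in atTop, x n = m := Nat.frequently_atTop_iff_infinite.2 hinf
      exact hfr.mono fun n hn => by simp [hn]
    · refine le_liminf_of_le hbu.isCoboundedUnder_ge ?_
      filter_upwards [hev] with n hn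
      exact_mod_cast F'.min'_le _ hn


noncomputable def QAut.someResolver {σ Q : Type} (A : QAut σ Q) : A.Resolver :=
  ⟨fun h a => (A.total (A.hlast h) a).choose, fun h a => (A.total (A.hlast h) a).choose_spec⟩

instance {σ Q : Type} (A : QAut σ Q) : Nonempty A.Resolver := ⟨A.someResolver⟩

lemma QAut.val_mem {σ Q : Type} [Fintype σ] [Fintype Q] (A : QAut σ Q)
    {ν : (ℕ → ℕ) → ℝ} (hν : IsClassic ν) (r : A.Resolver) (w : ℕ → σ) :
    ∃ v ∈ Finset.univ.image (fun t : Q × σ × Q => A.μ t.1 t.2.1 t.2.2),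
      A.val ν r w = (v : ℝ) :=
  classic_mem hν _ (fun n =>
    Finset.mem_image.2 ⟨(r.run w n, w n, r.run w (n + 1)), Finset.mem_univ _, rfl⟩)

lemma QAut.range_finite {σ Q : Type} [Fintype σ] [Fintype Q] (A : QAut σ Q)
    {ν : (ℕ → ℕ) → ℝ} (hν : IsClassic ν) (w : ℕ → σ) :
    (Set.range fun r : A.Resolver => A.val ν r w).Finite := by
  apply Set.Finite.subset
    ((Finset.univ.image (fun t : Q × σ × Q => A.μ t.1 t.2.1 t.2.2)).image
      (Nat.cast : ℕ → ℝ)).finite_toSet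
  rintro _ ⟨r, rfl⟩
  obtain ⟨v, hv, he⟩ := A.val_mem hν r w
  show A.val ν r w ∈ _
  rw [he]
  exact Finset.mem_coe.2 (Finset.mem_image.2 ⟨v, hv, rfl⟩)

/-- `∀ w ∀ f ∃ g : A^f(w) ≤ B^g(w)` holds iff trace inclusion
`A_sup(w) ≤ B_sup(w)` holds for all words `w`. -/
theorem wordwise_dominance_iff_inclusion {σ QA QB : Type} [Fintype σ] [Nonempty σ]
    [Fintype QA] [Fintype QB] (A : QAut σ QA) (B : QAut σ QB)
    (ν₁ ν₂ : (ℕ → ℕ) → ℝ) (h₁ : IsClassic ν₁) (h₂ : IsClassic ν₂) :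
    (∀ w : ℕ → σ, ∀ f : A.Resolver, ∃ g : B.Resolver,
        A.val ν₁ f w ≤ B.val ν₂ g w) ↔
      (∀ w : ℕ → σ, A.supVal ν₁ w ≤ B.supVal ν₂ w) := by
  classical
  constructor
  · intro H w
    refine ciSup_le fun f => ?_
    obtain ⟨g, hg⟩ := H w f
    exact hg.trans (le_ciSup (B.range_finite h₂ w).bddAbove g)
  · intro H w f
    have h1 : A.val ν₁ f w ≤ A.supVal ν₁ w :=
      le_ciSup (A.range_finite h₁ w).bddAbove f
    have hmem : B.supVal ν₂ w ∈ Set.range fun g : B.Resolver => B.val ν₂ g w := by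
      have hne : (Set.range fun g : B.Resolver => B.val ν₂ g w).Nonempty :=
        Set.range_nonempty _
      exact hne.csSup_mem (B.range_finite h₂ w)
    obtain ⟨g, hg⟩ := hmem
    exact ⟨g, h1.trans ((H w).trans hg.ge)⟩
end

section
/- For quantitative automata A and B (value functions in {Inf, Sup, LimSup, LimInf}), the relation 'for all words w there exists a resolver g of B such that for all resolvers f of A, A^f(w) ≤ B^g(w)' is equivalent to trace inclusion A_sup(w) ≤ B_sup(w) for all w. -/
open Filter

open Filter in
lemma classic_nat_val {ν : (ℕ → ℕ) → ℝ} (hν : IsClassic ν) {x : ℕ → ℕ} {M : ℕ}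
    (hx : ∀ n, x n ≤ M) : ∃ k ≤ M, ν x = (k : ℝ) := by
  have hbd : IsBoundedUnder (· ≤ ·) atTop (fun n => (x n : ℝ)) :=
    isBoundedUnder_of ⟨(M : ℝ), fun n => by exact_mod_cast hx n⟩
  have hbd' : IsBoundedUnder (· ≥ ·) atTop (fun n => (x n : ℝ)) :=
    isBoundedUnder_of ⟨(0 : ℝ), fun n => by positivity⟩
  have hSne : {m | ∃ᶠ n in atTop, x n = m}.Nonempty := by
    by_contra h
    rw [Set.not_nonempty_iff_eq_empty] at h
    have h1 : ∀ m ∈ Set.Iic M, ∀ᶠ n in atTop, x n ≠ m := by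
      intro m _
      have : m ∉ {m | ∃ᶠ n in atTop, x n = m} := by simp [h]
      simpa [Filter.not_frequently] using this
    obtain ⟨n, hn⟩ := ((Set.finite_Iic M).eventually_all.2 h1).exists
    exact hn (x n) (hx n) rfl
  have hSb : BddAbove {m | ∃ᶠ n in atTop, x n = m} := by
    refine ⟨M, fun m hm => ?_⟩
    obtain ⟨n, hn⟩ := hm.exists
    exact hn ▸ hx n
  rcases hν with rfl | rfl | rfl | rfl
  · -- vInf
    obtain ⟨n, hn⟩ := Nat.sInf_mem (Set.range_nonempty x)
    have hmin : ∀ m, x n ≤ x m := fun m => hn ▸ Nat.sInf_le ⟨m, rfl⟩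
    refine ⟨x n, hx n, le_antisymm ?_ ?_⟩
    · exact ciInf_le ⟨0, by rintro _ ⟨m, rfl⟩; positivity⟩ n
    · exact le_ciInf fun m => by exact_mod_cast hmin m
  · -- vSup
    obtain ⟨n, hn⟩ := Nat.sSup_mem (Set.range_nonempty x)
      ⟨M, by rintro _ ⟨m, rfl⟩; exact hx m⟩
    have hmax : ∀ m, x m ≤ x n := fun m => hn ▸ le_csSup ⟨M, by rintro _ ⟨m, rfl⟩; exact hx m⟩ ⟨m, rfl⟩
    refine ⟨x n, hx n, le_antisymm ?_ ?_⟩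
    · exact ciSup_le fun m => by exact_mod_cast hmax m
    · exact le_ciSup (f := fun m => ((x m : ℕ) : ℝ))
        ⟨(M : ℝ), by rintro _ ⟨m, rfl⟩; simpa using (by exact_mod_cast hx m : ((x m : ℕ) : ℝ) ≤ (M : ℝ))⟩ n
  · -- vLimSup
    set k := sSup {m | ∃ᶠ n in atTop, x n = m} with hkdef
    have hk : ∃ᶠ n in atTop, x n = k := Nat.sSup_mem hSne hSb
    have hkM : k ≤ M := by obtain ⟨n, hn⟩ := hk.exists; exact hn ▸ hx n
    have hev : ∀ᶠ n in atTop, x n ≤ k := by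
      have h1 : ∀ m ∈ Set.Ioc k M, ∀ᶠ n in atTop, x n ≠ m := by
        intro m hm
        by_contra hc
        rw [Filter.not_eventually] at hc
        simp only [not_not] at hc
        exact absurd (le_csSup hSb hc) (not_le.2 hm.1)
      filter_upwards [(Set.finite_Ioc k M).eventually_all.2 h1] with n hn
      by_contra hlt
      exact hn (x n) ⟨not_le.mp hlt, hx n⟩ rfl
    refine ⟨k, hkM, le_antisymm ?_ ?_⟩
    · exact limsup_le_of_le hbd'.isCoboundedUnder_le
        (hev.mono fun n h => by exact_mod_cast h)
    · exact le_limsup_of_frequently_le (hk.mono fun n h => by simp [h]) hbd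
  · -- vLimInf
    set k := sInf {m | ∃ᶠ n in atTop, x n = m} with hkdef
    have hk : ∃ᶠ n in atTop, x n = k := Nat.sInf_mem hSne
    have hkM : k ≤ M := by obtain ⟨n, hn⟩ := hk.exists; exact hn ▸ hx n
    have hev : ∀ᶠ n in atTop, k ≤ x n := by
      have h1 : ∀ m ∈ Set.Iio k, ∀ᶠ n in atTop, x n ≠ m := by
        intro m hm
        by_contra hc
        rw [Filter.not_eventually] at hc
        simp only [not_not] at hc
        exact absurd (Nat.sInf_le hc) (not_le.2 hm)
      filter_upwards [(Set.finite_Iio k).eventually_all.2 h1] with n hn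
      by_contra hlt
      exact hn (x n) (not_le.mp hlt) rfl
    refine ⟨k, hkM, le_antisymm ?_ ?_⟩
    · exact liminf_le_of_frequently_le (hk.mono fun n h => by simp [h]) hbd'
    · exact le_liminf_of_le hbd.isCoboundedUnder_ge
        (hev.mono fun n h => by exact_mod_cast h)

namespace QAut

variable {σ Q : Type}

instance instNonemptyResolver (A : QAut σ Q) : Nonempty A.Resolver :=
  ⟨⟨fun h a => (A.total (A.hlast h) a).choose, fun h a => (A.total (A.hlast h) a).choose_spec⟩⟩

/-- A uniform bound on all transition weights. -/
def bound (A : QAut σ Q) [Fintype σ] [Fintype Q] : ℕ :=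
  Finset.univ.sup fun p : Q × σ × Q => A.μ p.1 p.2.1 p.2.2

lemma wt_le_bound (A : QAut σ Q) [Fintype σ] [Fintype Q] (r : A.Resolver) (w : ℕ → σ) (n : ℕ) :
    r.wt w n ≤ A.bound :=
  Finset.le_sup (f := fun p : Q × σ × Q => A.μ p.1 p.2.1 p.2.2)
    (Finset.mem_univ (r.run w n, w n, r.run w (n + 1)))

lemma val_exists (A : QAut σ Q) [Fintype σ] [Fintype Q] {ν : (ℕ → ℕ) → ℝ} (hν : IsClassic ν)
    (r : A.Resolver) (w : ℕ → σ) : ∃ k ≤ A.bound, A.val ν r w = (k : ℝ) :=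
  classic_nat_val hν (A.wt_le_bound r w)

lemma range_finite_s2 (A : QAut σ Q) [Fintype σ] [Fintype Q] {ν : (ℕ → ℕ) → ℝ} (hν : IsClassic ν)
    (w : ℕ → σ) : (Set.range fun r : A.Resolver => A.val ν r w).Finite := by
  refine Set.Finite.subset ((Set.finite_Iic A.bound).image (Nat.cast : ℕ → ℝ)) ?_
  rintro _ ⟨r, rfl⟩
  obtain ⟨k, hk, he⟩ := A.val_exists hν r w
  exact ⟨k, hk, he.symm⟩

lemma bddAbove_range (A : QAut σ Q) [Fintype σ] [Fintype Q] {ν : (ℕ → ℕ) → ℝ}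
    (hν : IsClassic ν) (w : ℕ → σ) :
    BddAbove (Set.range fun r : A.Resolver => A.val ν r w) :=
  (A.range_finite_s2 hν w).bddAbove

lemma exists_sup_attained (A : QAut σ Q) [Fintype σ] [Fintype Q] {ν : (ℕ → ℕ) → ℝ}
    (hν : IsClassic ν) (w : ℕ → σ) : ∃ r : A.Resolver, A.supVal ν w = A.val ν r w := by
  have h := (Set.range_nonempty (fun r : A.Resolver => A.val ν r w)).csSup_mem
    (A.range_finite_s2 hν w)
  obtain ⟨r, hr⟩ := h
  exact ⟨r, hr.symm⟩

end QAut

/-- `∀ w ∃ g ∀ f : A^f(w) ≤ B^g(w)` holds iff trace inclusion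
`A_sup(w) ≤ B_sup(w)` holds for all words `w`. -/
theorem wordwise_blind_dominance_iff_inclusion {σ QA QB : Type} [Fintype σ] [Nonempty σ]
    [Fintype QA] [Fintype QB] (A : QAut σ QA) (B : QAut σ QB)
    (ν₁ ν₂ : (ℕ → ℕ) → ℝ) (h₁ : IsClassic ν₁) (h₂ : IsClassic ν₂) :
    (∀ w : ℕ → σ, ∃ g : B.Resolver, ∀ f : A.Resolver,
        A.val ν₁ f w ≤ B.val ν₂ g w) ↔
      (∀ w : ℕ → σ, A.supVal ν₁ w ≤ B.supVal ν₂ w) := by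
  constructor
  · intro h w
    obtain ⟨g, hg⟩ := h w
    refine ciSup_le fun f => (hg f).trans ?_
    exact le_ciSup (B.bddAbove_range h₂ w) g
  · intro h w
    obtain ⟨g, hg⟩ := B.exists_sup_attained h₂ w
    refine ⟨g, fun f => ?_⟩
    exact (le_ciSup (A.bddAbove_range h₁ w) f).trans ((h w).trans_eq hg)
end

section
/- There exist LimSup-automata A and B over alphabet {a,b} such that A is strategically dominated by B but B does not simulate A. Concretely: A reads letter a from s0 to s1, then nondeterministically from s1 to s2 or s3 on a; from s2 letter a goes to a weight-1 sink and b to a weight-0 sink; from s3 letter b goes to the weight-1 sink and a to the weight-0 sink; all unshown transitions go to a weight-0 sink. B is like A but the nondeterministic choice (between q1 and q2) happens at the first letter a from q0, the second a is deterministic from q1 to q3 and from q2 to q4, and then from q3 letter a goes to the weight-1 sink and b to the weight-0 sink, while from q4 letter b goes to the weight-1 sink and a to the weight-0 sink. -/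
open Filter

namespace QAut

variable {σ QA QB : Type}

/-- A Challenger strategy in the quantitative simulation game between `A` and `B`:
it maps a finite sequence of state pairs to a letter and an `A`-transition. -/
structure ChalStrat (A : QAut σ QA) (B : QAut σ QB) where
  τ : List (QA × QB) → σ × QA
  consistent : ∀ h : List (QA × QB),
    A.Δ (h.getLast?.getD (A.init, B.init)).1 (τ h).1 (τ h).2

/-- An outcome of a Challenger strategy: a word and a pair of runs where Challenger's
moves follow `τ` and Simulator responds with `B`-transitions. -/
structure SimOutcome {A : QAut σ QA} {B : QAut σ QB} (c : ChalStrat A B) where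
  w : ℕ → σ
  r1 : ℕ → QA
  r2 : ℕ → QB
  init1 : r1 0 = A.init
  init2 : r2 0 = B.init
  chal : ∀ n, c.τ ((List.range (n + 1)).map (fun i => (r1 i, r2 i))) = (w n, r1 (n + 1))
  sim : ∀ n, B.Δ (r2 n) (w n) (r2 (n + 1))

/-- Challenger's strategy is winning iff every outcome `(r1, r2)` satisfies
`ν₁(μ_A(r1)) > ν₂(μ_B(r2))`. -/
def ChalWins {A : QAut σ QA} {B : QAut σ QB} (ν₁ ν₂ : (ℕ → ℕ) → ℝ)
    (c : ChalStrat A B) : Prop :=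
  ∀ o : SimOutcome c,
    ν₂ (fun n => B.μ (o.r2 n) (o.w n) (o.r2 (n + 1))) <
      ν₁ (fun n => A.μ (o.r1 n) (o.w n) (o.r1 (n + 1)))

/-- `B` simulates `A` iff Challenger has no winning strategy in the simulation game. -/
def Simulates (ν₁ ν₂ : (ℕ → ℕ) → ℝ) (A : QAut σ QA) (B : QAut σ QB) : Prop :=
  ¬ ∃ c : ChalStrat A B, ChalWins ν₁ ν₂ c

end QAut

/-- States of the automaton `A` of the separating example:
`s0 --a--> s1`, then `s1 --a--> s2` or `s3`; `s2 --a-->` weight-1 sink `top`,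
`s2 --b-->` weight-0 sink `bot`; `s3 --b--> top`, `s3 --a--> bot`;
all other transitions go to `bot`. -/
inductive SA where
  | s0 | s1 | s2 | s3 | top | bot
  deriving DecidableEq

instance instFintypeSA : Fintype SA where
  elems := {.s0, .s1, .s2, .s3, .top, .bot}
  complete := fun x => by cases x <;> simp

/-- Successor lists of `A` (letters: `a = true`, `b = false`). -/
def Anext : SA → Bool → List SA
  | .s0, true => [.s1]
  | .s0, false => [.bot]
  | .s1, true => [.s2, .s3]
  | .s1, false => [.bot]
  | .s2, true => [.top]
  | .s2, false => [.bot]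
  | .s3, true => [.bot]
  | .s3, false => [.top]
  | .top, _ => [.top]
  | .bot, _ => [.bot]

/-- The concrete LimSup-automaton `A` of the separating example. -/
def AutA : QAut Bool SA where
  init := .s0
  Δ := fun q a q' => q' ∈ Anext q a
  total := by decide
  μ := fun q _ q' => if q = SA.top ∧ q' = SA.top then 1 else 0

/-- States of the automaton `B` of the separating example:
`q0 --a--> q1` or `q2`; `q1 --a--> q3`; `q2 --a--> q4`; `q3 --a-->` weight-1 sink
`top`, `q3 --b-->` weight-0 sink `bot`; `q4 --b--> top`, `q4 --a--> bot`;
all other transitions go to `bot`. -/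
inductive SB where
  | q0 | q1 | q2 | q3 | q4 | top | bot
  deriving DecidableEq

instance instFintypeSB : Fintype SB where
  elems := {.q0, .q1, .q2, .q3, .q4, .top, .bot}
  complete := fun x => by cases x <;> simp

/-- Successor lists of `B` (letters: `a = true`, `b = false`). -/
def Bnext : SB → Bool → List SB
  | .q0, true => [.q1, .q2]
  | .q0, false => [.bot]
  | .q1, true => [.q3]
  | .q1, false => [.bot]
  | .q2, true => [.q4]
  | .q2, false => [.bot]
  | .q3, true => [.top]
  | .q3, false => [.bot]
  | .q4, true => [.bot]
  | .q4, false => [.top]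
  | .top, _ => [.top]
  | .bot, _ => [.bot]

/-- The concrete LimSup-automaton `B` of the separating example. -/
def AutB : QAut Bool SB where
  init := .q0
  Δ := fun q a q' => q' ∈ Bnext q a
  total := by decide
  μ := fun q _ q' => if q = SB.top ∧ q' = SB.top then 1 else 0

namespace QAut

lemma hlast_hist {σ Q : Type} (A : QAut σ Q) (r : A.Resolver) (w : ℕ → σ) (n : ℕ) :
    A.hlast (r.hist w n) = r.run w n := by
  cases n with
  | zero => rfl
  | succ n => simp [Resolver.hist, Resolver.run, hlast]

lemma run_succ {σ Q : Type} {A : QAut σ Q} (r : A.Resolver) (w : ℕ → σ) (n : ℕ) :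
    r.run w (n + 1) = r.f (r.hist w n) (w n) := rfl

lemma run_mem {σ Q : Type} {A : QAut σ Q} (r : A.Resolver) (w : ℕ → σ) (n : ℕ) :
    A.Δ (r.run w n) (w n) (r.run w (n + 1)) := by
  have h := r.consistent (r.hist w n) (w n)
  rwa [hlast_hist] at h

end QAut

/-- The resolver of `B` that mimics the choice `c ∈ {s2, s3}` made by a resolver of `A`. -/
def gfun (c : SA) : SB → Bool → SB := fun q a =>
  match q, a with
  | .q0, true => if c = SA.s2 then .q1 else .q2
  | .q0, false => .bot
  | .q1, true => .q3
  | .q1, false => .bot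
  | .q2, true => .q4
  | .q2, false => .bot
  | .q3, true => .top
  | .q3, false => .bot
  | .q4, true => .bot
  | .q4, false => .top
  | .top, _ => .top
  | .bot, _ => .bot

lemma gfun_mem (c : SA) : ∀ (q : SB) (a : Bool), gfun c q a ∈ Bnext q a := by
  intro q a
  cases q <;> cases a <;> (simp [gfun, Bnext]; try exact Decidable.em _)

/-- The resolver of `B` induced by the choice `c`. -/
def gres (c : SA) : AutB.Resolver where
  f := fun h a => gfun c (AutB.hlast h) a
  consistent := fun h a => gfun_mem c (AutB.hlast h) a

/-- Challenger's move as a function of the current state pair. -/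
def cmove : SA × SB → Bool × SA := fun p =>
  match p with
  | (.s0, _) => (true, .s1)
  | (.s1, q) => if q = SB.q1 then (true, .s3) else (true, .s2)
  | (.s2, _) => (true, .top)
  | (.s3, _) => (false, .top)
  | (.top, _) => (true, .top)
  | (.bot, _) => (true, .bot)

lemma cmove_mem : ∀ p : SA × SB, (cmove p).2 ∈ Anext p.1 (cmove p).1 := by decide

/-- Challenger's winning strategy in the simulation game between `A` and `B`. -/
def cstrat : QAut.ChalStrat AutA AutB where
  τ := fun h => cmove (h.getLast?.getD (AutA.init, AutB.init))
  consistent := fun h => cmove_mem (h.getLast?.getD (AutA.init, AutB.init))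

/-- The concrete LimSup-automata `A` and `B` are such that `A` is
strategically dominated by `B`, but `B` does not simulate `A`. -/
theorem strategic_dominance_not_simulation :
    (∀ f : AutA.Resolver, ∃ g : AutB.Resolver, ∀ w : ℕ → Bool,
        AutA.val vLimSup f w ≤ AutB.val vLimSup g w) ∧
      ¬ QAut.Simulates vLimSup vLimSup AutA AutB := by
  constructor
  · -- strategic dominance
    intro f
    set c : SA := f.f [(true, SA.s1)] true with hc
    have hcmem : c ∈ Anext SA.s1 true := by
      have h := f.consistent [(true, SA.s1)] true
      have h1 : AutA.hlast [(true, SA.s1)] = SA.s1 := rfl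
      rw [h1] at h
      exact h
    refine ⟨gres c, fun w => ?_⟩
    set g : AutB.Resolver := gres c with hg
    have hB : ∀ n, g.run w (n + 1) = gfun c (g.run w n) (w n) := by
      intro n
      rw [QAut.run_succ]
      show gfun c (AutB.hlast (g.hist w n)) (w n) = _
      rw [QAut.hlast_hist]
    -- Invariant relating the two runs
    have key : ∀ n,
        (f.run w n = SA.s0 ∧ n = 0 ∧ g.run w n = SB.q0) ∨
        (f.run w n = SA.s1 ∧ n = 1 ∧ w 0 = true ∧
          g.run w n = (if c = SA.s2 then SB.q1 else SB.q2)) ∨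
        (f.run w n = SA.s2 ∧ c = SA.s2 ∧ g.run w n = SB.q3) ∨
        (f.run w n = SA.s3 ∧ c = SA.s3 ∧ g.run w n = SB.q4) ∨
        (f.run w n = SA.top ∧ g.run w n = SB.top) ∨
        f.run w n = SA.bot := by
      intro n
      induction n with
      | zero => exact Or.inl ⟨rfl, rfl, rfl⟩
      | succ n ih =>
        have hA : f.run w (n + 1) ∈ Anext (f.run w n) (w n) := QAut.run_mem f w n
        rcases ih with ⟨h1, hn, h2⟩ | ⟨h1, hn, hw0, h2⟩ | ⟨h1, hc2, h2⟩ |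
          ⟨h1, hc3, h2⟩ | ⟨h1, h2⟩ | h1
        · -- at (s0, q0), n = 0
          subst hn
          rw [h1] at hA
          cases hw : w 0 with
          | false =>
            rw [hw] at hA
            simp [Anext] at hA
            exact Or.inr (Or.inr (Or.inr (Or.inr (Or.inr hA))))
          | true =>
            rw [hw] at hA
            simp [Anext] at hA
            refine Or.inr (Or.inl ⟨hA, rfl, rfl, ?_⟩)
            rw [hB 0, h2, hw]
            rfl
        · -- at (s1, q1/q2), n = 1
          subst hn
          have hist1 : f.hist w 1 = [(true, SA.s1)] := by
            have h' : f.f [] (w 0) = SA.s1 := h1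
            rw [hw0] at h'
            simp [QAut.Resolver.hist, hw0, h']
          have hrun2 : f.run w 2 = f.f [(true, SA.s1)] (w 1) := by
            rw [QAut.run_succ, hist1]
          cases hw : w 1 with
          | false =>
            rw [h1, hw] at hA
            simp [Anext] at hA
            exact Or.inr (Or.inr (Or.inr (Or.inr (Or.inr hA))))
          | true =>
            have hrc : f.run w 2 = c := by rw [hrun2, hw, hc]
            have hB2 : g.run w 2 = gfun c (g.run w 1) (w 1) := hB 1
            rw [h2, hw] at hB2
            rcases (by simpa [Anext] using hcmem : c = SA.s2 ∨ c = SA.s3) with h | h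
            · refine Or.inr (Or.inr (Or.inl ⟨by rw [hrc, h], h, ?_⟩))
              rw [hB2, h]
              rfl
            · refine Or.inr (Or.inr (Or.inr (Or.inl ⟨by rw [hrc, h], h, ?_⟩)))
              have : c ≠ SA.s2 := by rw [h]; decide
              rw [hB2, h]
              simp [gfun, this, h]
        · -- at (s2, q3)
          rw [h1] at hA
          cases hw : w n with
          | false =>
            rw [hw] at hA
            simp [Anext] at hA
            exact Or.inr (Or.inr (Or.inr (Or.inr (Or.inr hA))))
          | true =>
            rw [hw] at hA
            simp [Anext] at hA
            refine Or.inr (Or.inr (Or.inr (Or.inr (Or.inl ⟨hA, ?_⟩))))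
            rw [hB n, h2, hw]
            rfl
        · -- at (s3, q4)
          rw [h1] at hA
          cases hw : w n with
          | true =>
            rw [hw] at hA
            simp [Anext] at hA
            exact Or.inr (Or.inr (Or.inr (Or.inr (Or.inr hA))))
          | false =>
            rw [hw] at hA
            simp [Anext] at hA
            refine Or.inr (Or.inr (Or.inr (Or.inr (Or.inl ⟨hA, ?_⟩))))
            rw [hB n, h2, hw]
            rfl
        · -- at (top, top)
          rw [h1] at hA
          simp [Anext] at hA
          refine Or.inr (Or.inr (Or.inr (Or.inr (Or.inl ⟨hA, ?_⟩))))
          rw [hB n, h2]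
          cases w n <;> rfl
        · -- A at bot
          rw [h1] at hA
          simp [Anext] at hA
          exact Or.inr (Or.inr (Or.inr (Or.inr (Or.inr hA))))
    have htop : ∀ n, f.run w n = SA.top → g.run w n = SB.top := by
      intro n hn
      rcases key n with ⟨h1, _⟩ | ⟨h1, _⟩ | ⟨h1, _⟩ | ⟨h1, _⟩ | ⟨h1, h2⟩ | h1 <;>
        first
          | exact h2
          | (rw [hn] at h1; exact absurd h1 (by decide))
    have hwt : ∀ n, f.wt w n ≤ g.wt w n := by
      intro n
      by_cases h : f.run w n = SA.top ∧ f.run w (n + 1) = SA.top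
      · have g1 := htop n h.1
        have g2 := htop (n + 1) h.2
        show (if f.run w n = SA.top ∧ f.run w (n + 1) = SA.top then 1 else 0) ≤
          (if g.run w n = SB.top ∧ g.run w (n + 1) = SB.top then 1 else 0)
        rw [if_pos h, if_pos ⟨g1, g2⟩]
      · have h0 : f.wt w n = 0 := by
          simp only [QAut.Resolver.wt, AutA]
          show (if f.run w n = SA.top ∧ f.run w (n + 1) = SA.top then 1 else 0) = 0
          rw [if_neg h]
        rw [h0]
        exact Nat.zero_le _
    show vLimSup (f.wt w) ≤ vLimSup (g.wt w)
    unfold vLimSup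
    refine Filter.limsup_le_limsup (Filter.Eventually.of_forall fun n => ?_) ?_ ?_
    · exact Nat.cast_le.mpr (hwt n)
    · exact (Filter.isBoundedUnder_of ⟨(0 : ℝ), fun n => Nat.cast_nonneg _⟩).isCoboundedUnder_le
    · refine Filter.isBoundedUnder_of ⟨(1 : ℝ), fun n => ?_⟩
      have : g.wt w n ≤ 1 := by
        simp only [QAut.Resolver.wt, AutB]
        split_ifs <;> simp
      exact_mod_cast this
  · -- B does not simulate A
    intro hsim
    apply hsim
    refine ⟨cstrat, ?_⟩
    intro o
    have hchal : ∀ n, cmove (o.r1 n, o.r2 n) = (o.w n, o.r1 (n + 1)) := by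
      intro n
      have h := o.chal n
      have hl : ((List.range (n + 1)).map (fun i => (o.r1 i, o.r2 i))).getLast? =
          some (o.r1 n, o.r2 n) := by
        rw [List.range_succ, List.map_append]
        simp
      simpa [cstrat, hl] using h
    have h0 := hchal 0
    rw [o.init1, o.init2] at h0
    have hw0 : o.w 0 = true := (congrArg Prod.fst h0).symm
    have hr11 : o.r1 1 = SA.s1 := (congrArg Prod.snd h0).symm
    have hs0 := o.sim 0
    rw [o.init2, hw0] at hs0
    have hr21 : o.r2 1 = SB.q1 ∨ o.r2 1 = SB.q2 := by
      simpa [AutB, Bnext] using hs0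
    -- In both cases: r1 3 = top and r2 3 = bot
    have hmain : o.r1 3 = SA.top ∧ o.r2 3 = SB.bot ∧
        o.r2 1 ≠ SB.top ∧ o.r2 2 ≠ SB.top := by
      rcases hr21 with h | h
      · have h1 := hchal 1
        rw [hr11, h] at h1
        have hw1 : o.w 1 = true := (congrArg Prod.fst h1).symm
        have hr12 : o.r1 2 = SA.s3 := (congrArg Prod.snd h1).symm
        have hs1 := o.sim 1
        rw [h, hw1] at hs1
        have hr22 : o.r2 2 = SB.q3 := by simpa [AutB, Bnext] using hs1
        have h2 := hchal 2
        rw [hr12, hr22] at h2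
        have hw2 : o.w 2 = false := (congrArg Prod.fst h2).symm
        have hr13 : o.r1 3 = SA.top := (congrArg Prod.snd h2).symm
        have hs2 := o.sim 2
        rw [hr22, hw2] at hs2
        have hr23 : o.r2 3 = SB.bot := by simpa [AutB, Bnext] using hs2
        exact ⟨hr13, hr23, by rw [h]; decide, by rw [hr22]; decide⟩
      · have h1 := hchal 1
        rw [hr11, h] at h1
        have hw1 : o.w 1 = true := (congrArg Prod.fst h1).symm
        have hr12 : o.r1 2 = SA.s2 := (congrArg Prod.snd h1).symm
        have hs1 := o.sim 1
        rw [h, hw1] at hs1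
        have hr22 : o.r2 2 = SB.q4 := by simpa [AutB, Bnext] using hs1
        have h2 := hchal 2
        rw [hr12, hr22] at h2
        have hw2 : o.w 2 = true := (congrArg Prod.fst h2).symm
        have hr13 : o.r1 3 = SA.top := (congrArg Prod.snd h2).symm
        have hs2 := o.sim 2
        rw [hr22, hw2] at hs2
        have hr23 : o.r2 3 = SB.bot := by simpa [AutB, Bnext] using hs2
        exact ⟨hr13, hr23, by rw [h]; decide, by rw [hr22]; decide⟩
    obtain ⟨hr13, hr23, hne1, hne2⟩ := hmain
    -- r1 stays at top from step 3 on
    have htop : ∀ n, 3 ≤ n → o.r1 n = SA.top := by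
      intro n hn
      induction n with
      | zero => omega
      | succ n ih =>
        rcases Nat.lt_or_ge n 3 with h | h
        · interval_cases n
          · omega
          · omega
          · exact hr13
        · have hn' := ih h
          have h' := hchal n
          rw [hn'] at h'
          exact (congrArg Prod.snd h').symm
    -- r2 stays at bot from step 3 on
    have hbot : ∀ n, 3 ≤ n → o.r2 n = SB.bot := by
      intro n hn
      induction n with
      | zero => omega
      | succ n ih =>
        rcases Nat.lt_or_ge n 3 with h | h
        · interval_cases n
          · omega
          · omega
          · exact hr23
        · have hn' := ih h
          have hs := o.sim n
          rw [hn'] at hs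
          have : o.r2 (n + 1) ∈ Bnext SB.bot (o.w n) := hs
          cases hw : o.w n <;> rw [hw] at this <;> simpa [Bnext] using this
    have hr2ne : ∀ n, o.r2 n ≠ SB.top := by
      intro n
      match n with
      | 0 => rw [o.init2]; decide
      | 1 => exact hne1
      | 2 => exact hne2
      | (m + 3) =>
        rw [hbot (m + 3) (by omega)]
        decide
    have hBzero : ∀ n, AutB.μ (o.r2 n) (o.w n) (o.r2 (n + 1)) = 0 := by
      intro n
      simp only [AutB]
      rw [if_neg]
      intro h
      exact hr2ne n h.1
    have hBval : vLimSup (fun n => AutB.μ (o.r2 n) (o.w n) (o.r2 (n + 1))) = 0 := by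
      unfold vLimSup
      have : (fun n => ((AutB.μ (o.r2 n) (o.w n) (o.r2 (n + 1)) : ℕ) : ℝ)) =
          fun _ => (0 : ℝ) := by
        funext n
        rw [hBzero n]
        norm_num
      rw [this, Filter.limsup_const]
    have hAval : vLimSup (fun n => AutA.μ (o.r1 n) (o.w n) (o.r1 (n + 1))) = 1 := by
      unfold vLimSup
      have hev : (fun n => ((AutA.μ (o.r1 n) (o.w n) (o.r1 (n + 1)) : ℕ) : ℝ)) =ᶠ[Filter.atTop]
          fun _ => (1 : ℝ) := by
        refine Filter.eventually_atTop.mpr ⟨3, fun n hn => ?_⟩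
        have h1 := htop n hn
        have h2 := htop (n + 1) (by omega)
        simp [AutA, h1, h2]
      rw [Filter.limsup_congr hev, Filter.limsup_const]
    rw [hBval, hAval]
    norm_num
end

section
/- Blind dominance implies product-based blind dominance: for quantitative automata A and B, if there exists a resolver g of B such that for all resolvers f of A and all words w, A^f(w) ≤ B^g(w), then there exists a partial resolver g' on the B-component of the synchronized product such that for all partial resolvers f' on the A-component and all words w, (A×₁B)^{f',g'}(w) ≤ (A×₂B)^{f',g'}(w). -/
open Filter

namespace QAut

variable {σ QA QB : Type}

/-- Last product state of a product history. -/
def plast (A : QAut σ QA) (B : QAut σ QB) (h : List (σ × (QA × QB))) : QA × QB :=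
  (h.getLast?.map Prod.snd).getD (A.init, B.init)

/-- A partial resolver operating (non-partially) on the first component of the
synchronized product of `A` and `B`: given the full product history and a letter, it
chooses a transition of `A`. -/
structure PRes1 (A : QAut σ QA) (B : QAut σ QB) where
  f : List (σ × (QA × QB)) → σ → QA
  consistent : ∀ h a, A.Δ (plast A B h).1 a (f h a)

/-- A partial resolver operating on the second component of the synchronized product. -/
structure PRes2 (A : QAut σ QA) (B : QAut σ QB) where
  g : List (σ × (QA × QB)) → σ → QB
  consistent : ∀ h a, B.Δ (plast A B h).2 a (g h a)

variable {A : QAut σ QA} {B : QAut σ QB}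

/-- The product history induced by a conclusive pair of partial resolvers on a word. -/
def prodHist (f : PRes1 A B) (g : PRes2 A B) (w : ℕ → σ) : ℕ → List (σ × (QA × QB))
  | 0 => []
  | n + 1 =>
    prodHist f g w n ++
      [(w n, (f.f (prodHist f g w n) (w n), g.g (prodHist f g w n) (w n)))]

/-- The unique run of the synchronized product induced by the conclusive pair `(f, g)`. -/
def prodRun (f : PRes1 A B) (g : PRes2 A B) (w : ℕ → σ) (n : ℕ) : QA × QB :=
  plast A B (prodHist f g w n)

/-- `(A×₁B)^{f,g}(w)`: the value of the product run, with weights taken from `A`. -/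
noncomputable def pval1 (ν : (ℕ → ℕ) → ℝ) (f : PRes1 A B) (g : PRes2 A B)
    (w : ℕ → σ) : ℝ :=
  ν (fun n => A.μ (prodRun f g w n).1 (w n) (prodRun f g w (n + 1)).1)

/-- `(A×₂B)^{f,g}(w)`: the value of the product run, with weights taken from `B`. -/
noncomputable def pval2 (ν : (ℕ → ℕ) → ℝ) (f : PRes1 A B) (g : PRes2 A B)
    (w : ℕ → σ) : ℝ :=
  ν (fun n => B.μ (prodRun f g w n).2 (w n) (prodRun f g w (n + 1)).2)

end QAut

namespace QAut

variable {σ QA QB : Type} {A : QAut σ QA} {B : QAut σ QB}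

/-- Projection of a product history to an `A`-history. -/
def projA (h : List (σ × (QA × QB))) : List (σ × QA) :=
  h.map (fun p => (p.1, p.2.1))

/-- Projection of a product history to a `B`-history. -/
def projB (h : List (σ × (QA × QB))) : List (σ × QB) :=
  h.map (fun p => (p.1, p.2.2))

lemma hlast_projA (A : QAut σ QA) (B : QAut σ QB) (h : List (σ × (QA × QB))) :
    A.hlast (projA h) = (plast A B h).1 := by
  unfold hlast plast projA
  rw [List.getLast?_map]
  cases h.getLast? <;> rfl

lemma hlast_projB (A : QAut σ QA) (B : QAut σ QB) (h : List (σ × (QA × QB))) :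
    B.hlast (projB h) = (plast A B h).2 := by
  unfold hlast plast projB
  rw [List.getLast?_map]
  cases h.getLast? <;> rfl

lemma prodHist_length (f : PRes1 A B) (g : PRes2 A B) (w : ℕ → σ) (n : ℕ) :
    (prodHist f g w n).length = n := by
  induction n with
  | zero => rfl
  | succ n ih => simp [prodHist, ih]

end QAut

/-- Blind dominance implies product-based blind dominance: if some
resolver `g` of `B` satisfies `A^f(w) ≤ B^g(w)` for all resolvers `f` of `A` and all
words `w`, then some partial resolver `g'` on the `B`-component of the synchronized
product satisfies `(A×₁B)^{f',g'}(w) ≤ (A×₂B)^{f',g'}(w)` for all partial resolvers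
`f'` on the `A`-component and all words `w`. -/
theorem blind_dominance_implies_product_blind_dominance {σ QA QB : Type} [Fintype σ]
    [Nonempty σ] [Fintype QA] [Fintype QB] (A : QAut σ QA) (B : QAut σ QB)
    (ν₁ ν₂ : (ℕ → ℕ) → ℝ) (h₁ : IsClassic ν₁) (h₂ : IsClassic ν₂)
    (hblind : ∃ g : B.Resolver, ∀ f : A.Resolver, ∀ w : ℕ → σ,
        A.val ν₁ f w ≤ B.val ν₂ g w) :
    ∃ g' : QAut.PRes2 A B, ∀ f' : QAut.PRes1 A B, ∀ w : ℕ → σ,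
      QAut.pval1 ν₁ f' g' w ≤ QAut.pval2 ν₂ f' g' w := by

  classical
  obtain ⟨g, hg⟩ := hblind
  refine ⟨⟨fun h a => g.f (QAut.projB h) a, fun h a => by
    rw [← QAut.hlast_projB A B h]; exact g.consistent _ a⟩, ?_⟩
  intro f' w
  set g' : QAut.PRes2 A B := ⟨fun h a => g.f (QAut.projB h) a, fun h a => by
    rw [← QAut.hlast_projB A B h]; exact g.consistent _ a⟩ with hg'def
  let dflt : QA → σ → QA := fun q a => Classical.choose (A.total q a)
  have hdflt : ∀ q a, A.Δ q a (dflt q a) := fun q a => Classical.choose_spec (A.total q a)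
  let F : List (σ × QA) → σ → QA := fun h a =>
    if h = QAut.projA (QAut.prodHist f' g' w h.length) ∧ a = w h.length then
      f'.f (QAut.prodHist f' g' w h.length) a
    else dflt (A.hlast h) a
  have Fcons : ∀ h a, A.Δ (A.hlast h) a (F h a) := by
    intro h a
    simp only [F]
    by_cases hc : h = QAut.projA (QAut.prodHist f' g' w h.length) ∧ a = w h.length
    · rw [if_pos hc]
      set hp := QAut.prodHist f' g' w h.length with hhp
      rw [hc.1, QAut.hlast_projA A B]
      exact f'.consistent _ a
    · rw [if_neg hc]; exact hdflt _ a
  let f : A.Resolver := ⟨F, Fcons⟩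
  have key : ∀ n, F (QAut.projA (QAut.prodHist f' g' w n)) (w n)
      = f'.f (QAut.prodHist f' g' w n) (w n) := by
    intro n
    have hlen : (QAut.projA (QAut.prodHist f' g' w n)).length = n := by
      simp [QAut.projA, QAut.prodHist_length]
    simp only [F, hlen]
    simp
  have hist_eq : ∀ n, f.hist w n = QAut.projA (QAut.prodHist f' g' w n) := by
    intro n
    induction n with
    | zero => rfl
    | succ n ih =>
      show f.hist w n ++ [(w n, f.f (f.hist w n) (w n))] = _
      rw [ih]
      show QAut.projA _ ++ [(w n, F (QAut.projA _) (w n))] = _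
      rw [key n]
      simp [QAut.projA, QAut.prodHist]
  have run_eq : ∀ n, f.run w n = (QAut.prodRun f' g' w n).1 := by
    intro n
    cases n with
    | zero => rfl
    | succ n =>
      show f.f (f.hist w n) (w n) = _
      rw [hist_eq n]
      show F (QAut.projA _) (w n) = _
      rw [key n]
      show _ = (QAut.plast A B (QAut.prodHist f' g' w (n+1))).1
      simp [QAut.prodHist, QAut.plast]
  have ghist_eq : ∀ n, g.hist w n = QAut.projB (QAut.prodHist f' g' w n) := by
    intro n
    induction n with
    | zero => rfl
    | succ n ih =>
      show g.hist w n ++ [(w n, g.f (g.hist w n) (w n))] = _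
      rw [ih]
      simp [QAut.projB, QAut.prodHist, g']
  have grun_eq : ∀ n, g.run w n = (QAut.prodRun f' g' w n).2 := by
    intro n
    cases n with
    | zero => rfl
    | succ n =>
      show g.f (g.hist w n) (w n) = _
      rw [ghist_eq n]
      show _ = (QAut.plast A B (QAut.prodHist f' g' w (n+1))).2
      simp [QAut.prodHist, QAut.plast, g']
  have h1 : QAut.pval1 ν₁ f' g' w = A.val ν₁ f w := by
    unfold QAut.pval1 QAut.val QAut.Resolver.wt
    congr 1
    funext n
    rw [run_eq n, run_eq (n+1)]
  have h2 : QAut.pval2 ν₂ f' g' w = B.val ν₂ g w := by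
    unfold QAut.pval2 QAut.val QAut.Resolver.wt
    congr 1
    funext n
    rw [grun_eq n, grun_eq (n+1)]
  rw [h1, h2]
  exact hg f w
end

section
/- Product-based blind dominance implies simulation: for quantitative automata A and B, if there exists a partial resolver g on the B-component of the synchronized product such that for all partial resolvers f on the A-component and all words w, (A×₁B)^{f,g}(w) ≤ (A×₂B)^{f,g}(w), then B simulates A (Challenger has no winning strategy in the quantitative simulation game). -/
open Filter

namespace QAut

variable {σ QA QB : Type}

/-- Convert a product history to a Challenger-input list of state pairs. -/
def conv (A : QAut σ QA) (B : QAut σ QB) (h : List (σ × (QA × QB))) : List (QA × QB) :=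
  (A.init, B.init) :: h.map Prod.snd

variable {A : QAut σ QA} {B : QAut σ QB}

lemma conv_last (h : List (σ × (QA × QB))) :
    ((conv A B h).getLast?).getD (A.init, B.init) = plast A B h := by
  induction h using List.reverseRecOn with
  | nil => rfl
  | append_singleton l x _ =>
    simp only [conv, plast, List.map_append, List.map_cons, List.map_nil,
      ← List.cons_append, List.getLast?_concat, Option.map_some, Option.getD_some]

open Classical in
/-- The partial resolver on the `A`-component induced by a Challenger strategy. -/
noncomputable def chalRes (c : ChalStrat A B) : PRes1 A B where
  f h a :=
    if a = (c.τ (conv A B h)).1 then (c.τ (conv A B h)).2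
    else Classical.choose (A.total (plast A B h).1 a)
  consistent h a := by
    split
    · next ha =>
      rw [ha]
      have := c.consistent (conv A B h)
      rwa [conv_last] at this
    · exact Classical.choose_spec (A.total (plast A B h).1 a)

/-- The product history of the play where Challenger follows `c` and Simulator follows `g`. -/
noncomputable def playHist (c : ChalStrat A B) (g : PRes2 A B) : ℕ → List (σ × (QA × QB))
  | 0 => []
  | n + 1 =>
    playHist c g n ++
      [((c.τ (conv A B (playHist c g n))).1,
        ((chalRes c).f (playHist c g n) (c.τ (conv A B (playHist c g n))).1,
         g.g (playHist c g n) (c.τ (conv A B (playHist c g n))).1))]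

/-- The word played by Challenger against `g`. -/
noncomputable def playWord (c : ChalStrat A B) (g : PRes2 A B) (n : ℕ) : σ :=
  (c.τ (conv A B (playHist c g n))).1

lemma prodHist_eq_playHist (c : ChalStrat A B) (g : PRes2 A B) (n : ℕ) :
    prodHist (chalRes c) g (playWord c g) n = playHist c g n := by
  induction n with
  | zero => rfl
  | succ n ih =>
    simp only [prodHist, playHist, ih, playWord]

lemma conv_playHist (c : ChalStrat A B) (g : PRes2 A B) (n : ℕ) :
    (List.range (n + 1)).map (fun i => prodRun (chalRes c) g (playWord c g) i) =
      conv A B (playHist c g n) := by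
  induction n with
  | zero => rfl
  | succ n ih =>
    rw [List.range_succ, List.map_append, ih]
    simp only [conv, playHist, List.map_append, List.map_cons, List.map_nil]
    rw [List.cons_append]
    congr 1
    simp only [prodRun, prodHist_eq_playHist, playHist, plast, List.getLast?_concat,
      List.map_cons, List.map_nil, Option.map_some, Option.getD_some]
    rfl

end QAut

/-- Product-based blind dominance implies simulation: if some partial
resolver `g` on the `B`-component satisfies `(A×₁B)^{f,g}(w) ≤ (A×₂B)^{f,g}(w)` for
all partial resolvers `f` on the `A`-component and all words `w`, then `B` simulates
`A`. -/
theorem product_blind_dominance_implies_simulation {σ QA QB : Type} [Fintype σ]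
    [Nonempty σ] [Fintype QA] [Fintype QB] (A : QAut σ QA) (B : QAut σ QB)
    (ν₁ ν₂ : (ℕ → ℕ) → ℝ) (h₁ : IsClassic ν₁) (h₂ : IsClassic ν₂)
    (hpblind : ∃ g : QAut.PRes2 A B, ∀ f : QAut.PRes1 A B, ∀ w : ℕ → σ,
        QAut.pval1 ν₁ f g w ≤ QAut.pval2 ν₂ f g w) :
    QAut.Simulates ν₁ ν₂ A B := by
  obtain ⟨g, hg⟩ := hpblind
  rintro ⟨c, hc⟩
  let f : QAut.PRes1 A B := QAut.chalRes c
  let w : ℕ → σ := QAut.playWord c g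
  have hwn : ∀ n, w n = (c.τ (QAut.conv A B (QAut.playHist c g n))).1 := fun n => rfl
  have hlastS : ∀ n, QAut.prodRun f g w (n + 1) =
      ((QAut.chalRes c).f (QAut.playHist c g n) (w n),
        g.g (QAut.playHist c g n) (w n)) := by
    intro n
    show QAut.plast A B (QAut.prodHist (QAut.chalRes c) g (QAut.playWord c g) (n + 1)) = _
    rw [QAut.prodHist_eq_playHist]
    simp only [QAut.playHist, QAut.plast, List.getLast?_concat, Option.map_some,
      Option.getD_some]
    rw [hwn n]
  have hplast : ∀ n, QAut.plast A B (QAut.playHist c g n) = QAut.prodRun f g w n := by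
    intro n
    show _ = QAut.plast A B (QAut.prodHist (QAut.chalRes c) g (QAut.playWord c g) n)
    rw [QAut.prodHist_eq_playHist]
  let o : QAut.SimOutcome c :=
    { w := w
      r1 := fun n => (QAut.prodRun f g w n).1
      r2 := fun n => (QAut.prodRun f g w n).2
      init1 := rfl
      init2 := rfl
      chal := by
        intro n
        have hconv : (List.range (n + 1)).map
            (fun i => ((QAut.prodRun f g w i).1, (QAut.prodRun f g w i).2)) =
            QAut.conv A B (QAut.playHist c g n) := by
          rw [← QAut.conv_playHist c g n]
        show c.τ _ = (w n, (QAut.prodRun f g w (n + 1)).1)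
        rw [hconv]
        have h1 : ((QAut.prodRun f g w (n + 1)).1) =
            (c.τ (QAut.conv A B (QAut.playHist c g n))).2 := by
          rw [hlastS n]
          show (QAut.chalRes c).f (QAut.playHist c g n) (w n) = _
          rw [hwn n]
          simp [QAut.chalRes]
        rw [h1, hwn n]
      sim := by
        intro n
        show B.Δ (QAut.prodRun f g w n).2 (w n) (QAut.prodRun f g w (n + 1)).2
        have h2 : ((QAut.prodRun f g w (n + 1)).2) =
            g.g (QAut.playHist c g n) (w n) := by rw [hlastS n]
        rw [h2, ← hplast n]
        exact g.consistent (QAut.playHist c g n) (w n) }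
  have hlt := hc o
  have hle := hg f w
  simp only [QAut.pval1, QAut.pval2] at hle
  exact absurd hle (not_le.mpr hlt)
end

section
/- The bottom value characterization: for a quantitative automaton A with value function in {Inf, Sup, LimSup, LimInf} and an integer x, the bottom value inf over words w of A_sup(w) equals x if and only if there exist a word w1 and a resolver f1 such that A^{f1}(w1) = x, A^{f1}(w1) ≥ A^{f2}(w1) for every resolver f2, and for every word w2 there exists a resolver f3 with A^{f1}(w1) ≤ A^{f3}(w2). -/
open Filter

section Helpers

open Filter

lemma limsup_mem_of_finite {S : Set ℝ} (hS : S.Finite) (f : ℕ → ℝ)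
    (hf : ∀ n, f n ∈ S) : Filter.limsup f Filter.atTop ∈ S := by
  have hne : S.Nonempty := ⟨f 0, hf 0⟩
  obtain ⟨M, hM⟩ := hS.bddAbove
  obtain ⟨m, hm⟩ := hS.bddBelow
  have hbdd : Filter.IsBoundedUnder (· ≤ ·) Filter.atTop f :=
    Filter.isBoundedUnder_of ⟨M, fun n => hM (hf n)⟩
  have hbdd' : Filter.IsBoundedUnder (· ≥ ·) Filter.atTop f :=
    Filter.isBoundedUnder_of ⟨m, fun n => hm (hf n)⟩
  by_contra hL
  set L := Filter.limsup f Filter.atTop with hLdef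
  set E := (fun s => |s - L|) '' S with hE
  have hEfin : E.Finite := hS.image _
  have hEne : E.Nonempty := hne.image _
  have hεmem := hEne.csInf_mem hEfin
  set ε := sInf E with hεdef
  obtain ⟨s₀, hs₀, hs₀'⟩ := hεmem
  have hεpos : 0 < ε := by
    rw [← hs₀']
    exact abs_pos.mpr (sub_ne_zero.mpr (fun h => hL (h ▸ hs₀)))
  have hεle : ∀ s ∈ S, ε ≤ |s - L| := fun s hs => csInf_le hEfin.bddBelow ⟨s, hs, rfl⟩
  have h1 : ∃ᶠ n in Filter.atTop, L - ε < f n :=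
    Filter.frequently_lt_of_lt_limsup hbdd'.isCoboundedUnder_le (by linarith)
  have h2 : ∀ᶠ n in Filter.atTop, f n < L + ε :=
    Filter.eventually_lt_of_limsup_lt (by linarith) hbdd
  obtain ⟨n, hn1, hn2⟩ := (h1.and_eventually h2).exists
  have : |f n - L| < ε := abs_sub_lt_iff.mpr ⟨by linarith, by linarith⟩
  linarith [hεle (f n) (hf n)]

lemma liminf_mem_of_finite {S : Set ℝ} (hS : S.Finite) (f : ℕ → ℝ)
    (hf : ∀ n, f n ∈ S) : Filter.liminf f Filter.atTop ∈ S := by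
  have hne : S.Nonempty := ⟨f 0, hf 0⟩
  obtain ⟨M, hM⟩ := hS.bddAbove
  obtain ⟨m, hm⟩ := hS.bddBelow
  have hbdd : Filter.IsBoundedUnder (· ≤ ·) Filter.atTop f :=
    Filter.isBoundedUnder_of ⟨M, fun n => hM (hf n)⟩
  have hbdd' : Filter.IsBoundedUnder (· ≥ ·) Filter.atTop f :=
    Filter.isBoundedUnder_of ⟨m, fun n => hm (hf n)⟩
  by_contra hL
  set L := Filter.liminf f Filter.atTop with hLdef
  set E := (fun s => |s - L|) '' S with hE
  have hEfin : E.Finite := hS.image _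
  have hEne : E.Nonempty := hne.image _
  have hεmem := hEne.csInf_mem hEfin
  set ε := sInf E with hεdef
  obtain ⟨s₀, hs₀, hs₀'⟩ := hεmem
  have hεpos : 0 < ε := by
    rw [← hs₀']
    exact abs_pos.mpr (sub_ne_zero.mpr (fun h => hL (h ▸ hs₀)))
  have hεle : ∀ s ∈ S, ε ≤ |s - L| := fun s hs => csInf_le hEfin.bddBelow ⟨s, hs, rfl⟩
  have h1 : ∃ᶠ n in Filter.atTop, f n < L + ε :=
    Filter.frequently_lt_of_liminf_lt hbdd.isCoboundedUnder_ge (by linarith)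
  have h2 : ∀ᶠ n in Filter.atTop, L - ε < f n :=
    Filter.eventually_lt_of_lt_liminf (by linarith) hbdd'
  obtain ⟨n, hn1, hn2⟩ := (h1.and_eventually h2).exists
  have : |f n - L| < ε := abs_sub_lt_iff.mpr ⟨by linarith, by linarith⟩
  linarith [hεle (f n) (hf n)]

lemma classic_mem_of_finite {S : Set ℝ} (hS : S.Finite) {ν : (ℕ → ℕ) → ℝ}
    (hν : IsClassic ν) (f : ℕ → ℕ) (hf : ∀ n, ((f n : ℝ)) ∈ S) : ν f ∈ S := by
  have hsub : Set.range (fun n => (f n : ℝ)) ⊆ S := by rintro _ ⟨n, rfl⟩; exact hf n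
  have hfin : (Set.range (fun n => (f n : ℝ))).Finite := hS.subset hsub
  have hne : (Set.range (fun n => (f n : ℝ))).Nonempty := Set.range_nonempty _
  rcases hν with h | h | h | h
  · subst h; exact hsub (hne.csInf_mem hfin)
  · subst h; exact hsub (hne.csSup_mem hfin)
  · subst h; exact limsup_mem_of_finite hS _ hf
  · subst h; exact liminf_mem_of_finite hS _ hf

end Helpers

/-- Bottom-value characterization: `inf_w A_sup(w) = x` iff there
are a word `w1` and a resolver `f1` with `A^{f1}(w1) = x`, no resolver exceeds `f1`
on `w1`, and for every word `w2` some resolver `f3` satisfies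
`A^{f1}(w1) ≤ A^{f3}(w2)`. -/
theorem bottom_value_characterization {σ Q : Type} [Fintype σ] [Nonempty σ] [Fintype Q]
    (A : QAut σ Q) (ν : (ℕ → ℕ) → ℝ) (hν : IsClassic ν) (x : ℤ) :
    (⨅ w : ℕ → σ, A.supVal ν w) = (x : ℝ) ↔
      ∃ w1 : ℕ → σ, ∃ f1 : A.Resolver,
        A.val ν f1 w1 = (x : ℝ) ∧
        (∀ f2 : A.Resolver, A.val ν f2 w1 ≤ A.val ν f1 w1) ∧
        (∀ w2 : ℕ → σ, ∃ f3 : A.Resolver, A.val ν f1 w1 ≤ A.val ν f3 w2) := by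
  classical
  set S : Set ℝ := Set.range (fun p : Q × σ × Q => (A.μ p.1 p.2.1 p.2.2 : ℝ)) with hSdef
  have hSfin : S.Finite := Set.finite_range _
  have hval : ∀ (r : A.Resolver) (w : ℕ → σ), A.val ν r w ∈ S := fun r w =>
    classic_mem_of_finite hSfin hν _ (fun n => ⟨(r.run w n, w n, r.run w (n + 1)), rfl⟩)
  haveI : Nonempty A.Resolver :=
    ⟨⟨fun h a => (A.total (A.hlast h) a).choose, fun h a => (A.total (A.hlast h) a).choose_spec⟩⟩
  have hsub : ∀ w : ℕ → σ, Set.range (fun r : A.Resolver => A.val ν r w) ⊆ S := by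
    rintro w _ ⟨r, rfl⟩; exact hval r w
  have hfinr : ∀ w : ℕ → σ, (Set.range (fun r : A.Resolver => A.val ν r w)).Finite :=
    fun w => hSfin.subset (hsub w)
  have hle : ∀ (w : ℕ → σ) (r : A.Resolver), A.val ν r w ≤ A.supVal ν w := fun w r =>
    le_csSup (hfinr w).bddAbove ⟨r, rfl⟩
  have hsup : ∀ w : ℕ → σ, ∃ r : A.Resolver, A.val ν r w = A.supVal ν w := by
    intro w
    obtain ⟨r, hr⟩ := (Set.range_nonempty
      (fun r : A.Resolver => A.val ν r w)).csSup_mem (hfinr w)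
    exact ⟨r, hr⟩
  have hsupS : ∀ w : ℕ → σ, A.supVal ν w ∈ S := by
    intro w; obtain ⟨r, hr⟩ := hsup w; rw [← hr]; exact hval r w
  have hTsub : Set.range (A.supVal ν) ⊆ S := by rintro _ ⟨w, rfl⟩; exact hsupS w
  have hTfin : (Set.range (A.supVal ν)).Finite := hSfin.subset hTsub
  constructor
  · intro h
    obtain ⟨w1, hw1⟩ := (Set.range_nonempty (A.supVal ν)).csInf_mem hTfin
    obtain ⟨f1, hf1⟩ := hsup w1
    refine ⟨w1, f1, ?_, ?_, ?_⟩
    · rw [hf1, hw1]; exact h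
    · intro f2; rw [hf1]; exact hle w1 f2
    · intro w2
      obtain ⟨f3, hf3⟩ := hsup w2
      refine ⟨f3, ?_⟩
      rw [hf1, hw1, hf3]
      exact csInf_le hTfin.bddBelow ⟨w2, rfl⟩
  · rintro ⟨w1, f1, h1, h2, h3⟩
    have hsup1 : A.supVal ν w1 = (x : ℝ) := by
      refine IsGreatest.csSup_eq ⟨⟨f1, h1⟩, ?_⟩
      rintro _ ⟨f2, rfl⟩
      rw [← h1] at *; exact h2 f2
    refine IsLeast.csInf_eq ⟨⟨w1, hsup1⟩, ?_⟩
    rintro _ ⟨w2, rfl⟩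
    obtain ⟨f3, hf3⟩ := h3 w2
    calc (x : ℝ) = A.val ν f1 w1 := h1.symm
      _ ≤ A.val ν f3 w2 := hf3
      _ ≤ A.supVal ν w2 := hle w2 f3
end

section
/- Simulation implies strategic dominance: for quantitative automata A and B with value functions in {Inf, Sup, LimSup, LimInf}, if B simulates A (Challenger has no winning strategy in the quantitative simulation game), then for every resolver f of A there exists a resolver g of B such that A^f(w) ≤ B^g(w) for all infinite words w. -/
open Filter

open Filter

namespace SD

/-- `k` occurs infinitely often in `z`. -/
def IOcc (z : ℕ → ℕ) (k : ℕ) : Prop := ∀ T : ℕ, ∃ t, T ≤ t ∧ z t = k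

lemma exists_iocc_P {z : ℕ → ℕ} {b : ℕ} (hb : ∀ t, z t ≤ b) {P : ℕ → Prop}
    (hP : ∀ T : ℕ, ∃ t, T ≤ t ∧ P (z t)) : ∃ k, P k ∧ IOcc z k := by
  by_contra h
  push_neg at h
  have h' : ∀ k, P k → ∃ T, ∀ t, T ≤ t → z t ≠ k := by
    intro k hk
    have := h k hk
    unfold IOcc at this; push_neg at this
    obtain ⟨T, hT⟩ := this
    exact ⟨T, fun t ht => hT t ht⟩
  classical
  choose T hT using h'
  set T0 := (Finset.range (b+1)).sup (fun k => if hk : P k then T k hk else 0) with hT0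
  obtain ⟨t, ht, hPt⟩ := hP T0
  have hle : (if hk : P (z t) then T (z t) hk else 0) ≤ T0 := by
    exact Finset.le_sup (f := fun k => if hk : P k then T k hk else 0)
      (by simp [Nat.lt_succ_iff, hb t])
  rw [dif_pos hPt] at hle
  exact hT (z t) hPt t (le_trans hle ht) rfl

lemma exists_iocc {z : ℕ → ℕ} {b : ℕ} (hb : ∀ t, z t ≤ b) : ∃ k, IOcc z k := by
  obtain ⟨k, -, hk⟩ := exists_iocc_P hb (P := fun _ => True) (fun T => ⟨T, le_rfl, trivial⟩)
  exact ⟨k, hk⟩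

noncomputable def maxIO (z : ℕ → ℕ) : ℕ := sSup {k | IOcc z k}
noncomputable def minIO (z : ℕ → ℕ) : ℕ := sInf {k | IOcc z k}

variable {z : ℕ → ℕ} {b : ℕ}

lemma iocc_bddAbove (hb : ∀ t, z t ≤ b) : BddAbove {k | IOcc z k} := by
  refine ⟨b, fun k hk => ?_⟩
  obtain ⟨t, -, ht⟩ := hk 0
  exact ht ▸ hb t

lemma iocc_maxIO (hb : ∀ t, z t ≤ b) : IOcc z (maxIO z) :=
  Nat.sSup_mem ⟨_, (exists_iocc hb).choose_spec⟩ (iocc_bddAbove hb)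

lemma le_maxIO (hb : ∀ t, z t ≤ b) {k : ℕ} (hk : IOcc z k) : k ≤ maxIO z :=
  le_csSup (iocc_bddAbove hb) hk

lemma iocc_minIO (hb : ∀ t, z t ≤ b) : IOcc z (minIO z) :=
  Nat.sInf_mem (s := {k | IOcc z k}) ⟨_, (exists_iocc hb).choose_spec⟩

lemma minIO_le {k : ℕ} (hk : IOcc z k) : minIO z ≤ k := Nat.sInf_le hk

lemma maxIO_le_of_ev (hb : ∀ t, z t ≤ b) {m T : ℕ} (h : ∀ t, T ≤ t → z t ≤ m) :
    maxIO z ≤ m := by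
  obtain ⟨t, ht, hz⟩ := iocc_maxIO hb T
  exact hz ▸ h t ht

lemma le_minIO_of_ev (hb : ∀ t, z t ≤ b) {m T : ℕ} (h : ∀ t, T ≤ t → m ≤ z t) :
    m ≤ minIO z := by
  obtain ⟨t, ht, hz⟩ := iocc_minIO hb T
  exact hz ▸ h t ht

lemma le_maxIO_of_freq (hb : ∀ t, z t ≤ b) {m : ℕ} (h : ∀ T, ∃ t, T ≤ t ∧ m ≤ z t) :
    m ≤ maxIO z := by
  obtain ⟨k, hk, hio⟩ := exists_iocc_P hb (P := fun k => m ≤ k) h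
  exact le_trans hk (le_maxIO hb hio)

lemma minIO_le_of_freq (hb : ∀ t, z t ≤ b) {m : ℕ} (h : ∀ T, ∃ t, T ≤ t ∧ z t ≤ m) :
    minIO z ≤ m := by
  obtain ⟨k, hk, hio⟩ := exists_iocc_P hb (P := fun k => k ≤ m) h
  exact le_trans (minIO_le hio) hk

lemma ev_le_maxIO (hb : ∀ t, z t ≤ b) : ∃ T, ∀ t, T ≤ t → z t ≤ maxIO z := by
  by_contra h
  push_neg at h
  have : maxIO z + 1 ≤ maxIO z := by
    apply le_maxIO_of_freq hb
    intro T
    obtain ⟨t, ht, hz⟩ := h T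
    exact ⟨t, ht, hz⟩
  omega

lemma ev_minIO_le (hb : ∀ t, z t ≤ b) : ∃ T, ∀ t, T ≤ t → minIO z ≤ z t := by
  by_contra h
  push_neg at h
  rcases Nat.eq_zero_or_pos (minIO z) with h0 | h0
  · obtain ⟨t, -, hz⟩ := h 0; omega
  have : minIO z ≤ minIO z - 1 := by
    apply minIO_le_of_freq hb
    intro T
    obtain ⟨t, ht, hz⟩ := h T
    exact ⟨t, ht, by omega⟩
  omega

lemma maxIO_eq_of_ev_const {c T : ℕ} (h : ∀ t, T ≤ t → z t = c) : maxIO z = c := by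
  have hb : ∀ t, z t ≤ (Finset.range (T+1)).sup z + c := by
    intro t
    rcases le_or_gt T t with h' | h'
    · rw [h t h']; omega
    · have : z t ≤ (Finset.range (T+1)).sup z := Finset.le_sup (by simp; omega)
      omega
  refine le_antisymm (maxIO_le_of_ev hb (fun t ht => (h t ht).le)) ?_
  exact le_maxIO hb (fun T' => ⟨max T T', le_max_right _ _, h _ (le_max_left _ _)⟩)

lemma minIO_eq_of_ev_const {c T : ℕ} (h : ∀ t, T ≤ t → z t = c) : minIO z = c := by
  refine le_antisymm (minIO_le (fun T' => ⟨max T T', le_max_right _ _, h _ (le_max_left _ _)⟩)) ?_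
  have hb : ∀ t, z t ≤ (Finset.range (T+1)).sup z + c := by
    intro t
    rcases le_or_gt T t with h' | h'
    · rw [h t h']; omega
    · have : z t ≤ (Finset.range (T+1)).sup z := Finset.le_sup (by simp; omega)
      omega
  exact le_minIO_of_ev hb (fun t ht => (h t ht).ge)

lemma iocc_comp {k : ℕ} (c : ℕ → ℕ) (h : IOcc z k) : IOcc (fun t => c (z t)) (c k) := by
  intro T
  obtain ⟨t, ht, hz⟩ := h T
  exact ⟨t, ht, by show c (z t) = c k; rw [hz]⟩

lemma maxIO_comp_mono (hb : ∀ t, z t ≤ b) {c : ℕ → ℕ} (hc : Monotone c) :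
    maxIO (fun t => c (z t)) = c (maxIO z) := by
  have hb' : ∀ t, c (z t) ≤ c b := fun t => hc (hb t)
  refine le_antisymm ?_ (le_maxIO hb' (iocc_comp c (iocc_maxIO hb)))
  obtain ⟨T, hT⟩ := ev_le_maxIO hb
  exact maxIO_le_of_ev hb' (fun t ht => hc (hT t ht))

lemma maxIO_max {u v : ℕ → ℕ} (hu : ∀ t, u t ≤ b) (hv : ∀ t, v t ≤ b) :
    maxIO (fun t => max (u t) (v t)) = max (maxIO u) (maxIO v) := by
  have hb' : ∀ t, max (u t) (v t) ≤ b := fun t => by have := hu t; have := hv t; omega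
  refine le_antisymm ?_ ?_
  · obtain ⟨T1, h1⟩ := ev_le_maxIO hu
    obtain ⟨T2, h2⟩ := ev_le_maxIO hv
    refine maxIO_le_of_ev hb' (T := max T1 T2) (fun t ht => ?_)
    have := h1 t (le_trans (le_max_left _ _) ht)
    have := h2 t (le_trans (le_max_right _ _) ht)
    omega
  · refine max_le ?_ ?_
    · refine le_maxIO_of_freq hb' (fun T => ?_)
      obtain ⟨t, ht, hz⟩ := iocc_maxIO hu T
      exact ⟨t, ht, by omega⟩
    · refine le_maxIO_of_freq hb' (fun T => ?_)
      obtain ⟨t, ht, hz⟩ := iocc_maxIO hv T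
      exact ⟨t, ht, by omega⟩

lemma maxIO_flip (hb : ∀ t, z t ≤ b) {N : ℕ} (hN : ∀ t, z t ≤ N) :
    maxIO (fun t => N - z t) = N - minIO z := by
  have hb' : ∀ t, N - z t ≤ N := fun t => by omega
  refine le_antisymm ?_ ?_
  · obtain ⟨T, hT⟩ := ev_minIO_le hb
    exact maxIO_le_of_ev hb' (fun t ht => by have := hT t ht; omega)
  · refine le_maxIO_of_freq hb' (fun T => ?_)
    obtain ⟨t, ht, hz⟩ := iocc_minIO hb T
    have := hN t
    exact ⟨t, ht, by omega⟩

/-- key parity computation for the "max scheme". -/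
lemma odd_maxIO_scheme {u v : ℕ → ℕ} {b : ℕ} (hu : ∀ t, u t ≤ b) (hv : ∀ t, v t ≤ b) :
    (Odd (maxIO (fun t => max (2 * u t + 1) (2 * v t + 2))) ↔ maxIO v < maxIO u) := by
  have hu' : ∀ t, 2 * u t + 1 ≤ 2*b+2 := fun t => by have := hu t; omega
  have hv' : ∀ t, 2 * v t + 2 ≤ 2*b+2 := fun t => by have := hv t; omega
  have e1 : maxIO (fun t => 2 * u t + 1) = 2 * maxIO u + 1 :=
    maxIO_comp_mono hu (c := fun k => 2*k+1) (fun a b h => by dsimp only; omega)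
  have e2 : maxIO (fun t => 2 * v t + 2) = 2 * maxIO v + 2 :=
    maxIO_comp_mono hv (c := fun k => 2*k+2) (fun a b h => by dsimp only; omega)
  rw [maxIO_max hu' hv', e1, e2, Nat.odd_iff]
  omega

lemma maxIO_if {P : ℕ → Prop} [∀ t, Decidable (P t)] {a c : ℕ} (hac : c < a)
    (hio : ∀ T, ∃ t, T ≤ t ∧ P t) :
    maxIO (fun t => if P t then a else c) = a := by
  classical
  have hb : ∀ t, (if P t then a else c) ≤ a := fun t => by split <;> omega
  refine le_antisymm (maxIO_le_of_ev hb (T := 0) (fun t _ => hb t)) ?_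
  refine le_maxIO_of_freq hb (fun T => ?_)
  obtain ⟨t, ht, hP⟩ := hio T
  exact ⟨t, ht, by simp [hP]⟩

lemma maxIO_if_not {P : ℕ → Prop} [∀ t, Decidable (P t)] {a c T0 : ℕ}
    (hev : ∀ t, T0 ≤ t → ¬ P t) :
    maxIO (fun t => if P t then a else c) = c := by
  classical
  refine maxIO_eq_of_ev_const (T := T0) (fun t ht => ?_)
  exact if_neg (hev t ht)

end SD


open Filter

namespace SD

/-- running minimum of `x 0 .. x t`. -/
def rmin (x : ℕ → ℕ) : ℕ → ℕ
  | 0 => x 0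
  | t+1 => min (rmin x t) (x (t+1))

/-- running maximum of `x 0 .. x t`. -/
def rmax (x : ℕ → ℕ) : ℕ → ℕ
  | 0 => x 0
  | t+1 => max (rmax x t) (x (t+1))

variable {x : ℕ → ℕ} {b : ℕ}

lemma rmin_le_self (t : ℕ) : rmin x t ≤ x t := by cases t <;> simp [rmin]
lemma self_le_rmax (t : ℕ) : x t ≤ rmax x t := by cases t <;> simp [rmax]
lemma rmin_le_bound (hb : ∀ t, x t ≤ b) (t : ℕ) : rmin x t ≤ b :=
  le_trans (rmin_le_self t) (hb t)
lemma rmax_le_bound (hb : ∀ t, x t ≤ b) (t : ℕ) : rmax x t ≤ b := by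
  induction t with
  | zero => exact hb 0
  | succ t ih => simp only [rmax]; exact max_le ih (hb (t+1))

lemma rmin_antitone : Antitone (rmin x) := by
  refine antitone_nat_of_succ_le (fun t => ?_)
  simp [rmin]
lemma rmax_monotone : Monotone (rmax x) := by
  refine monotone_nat_of_le_succ (fun t => ?_)
  simp [rmax]

lemma rmin_attained (t : ℕ) : ∃ s, s ≤ t ∧ rmin x t = x s := by
  induction t with
  | zero => exact ⟨0, le_rfl, rfl⟩
  | succ t ih =>
    obtain ⟨s, hs, he⟩ := ih
    rcases le_or_gt (rmin x t) (x (t+1)) with h | h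
    · exact ⟨s, by omega, by show min (rmin x t) (x (t+1)) = x s; rw [min_eq_left h, he]⟩
    · exact ⟨t+1, le_rfl, by show min (rmin x t) (x (t+1)) = x (t+1); rw [min_eq_right h.le]⟩

lemma rmax_attained (t : ℕ) : ∃ s, s ≤ t ∧ rmax x t = x s := by
  induction t with
  | zero => exact ⟨0, le_rfl, rfl⟩
  | succ t ih =>
    obtain ⟨s, hs, he⟩ := ih
    rcases le_or_gt (x (t+1)) (rmax x t) with h | h
    · exact ⟨s, by omega, by show max (rmax x t) (x (t+1)) = x s; rw [max_eq_left h, he]⟩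
    · exact ⟨t+1, le_rfl, by show max (rmax x t) (x (t+1)) = x (t+1); rw [max_eq_right h.le]⟩

lemma rmin_le_of_le {s t : ℕ} (h : s ≤ t) : rmin x t ≤ x s :=
  le_trans (rmin_antitone h) (rmin_le_self s)
lemma le_rmax_of_le {s t : ℕ} (h : s ≤ t) : x s ≤ rmax x t :=
  le_trans (self_le_rmax s) (rmax_monotone h)

/-- an antitone (bounded) ℕ-sequence is eventually constant. -/
lemma anti_stab {f : ℕ → ℕ} (hf : Antitone f) : ∃ T, ∀ t, T ≤ t → f t = f T := by
  by_contra h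
  push_neg at h
  have key : ∀ n, ∃ t, f t + n ≤ f 0 := by
    intro n
    induction n with
    | zero => exact ⟨0, by omega⟩
    | succ n ih =>
      obtain ⟨t, ht⟩ := ih
      obtain ⟨t', ht', hne⟩ := h t
      have h1 : f t' ≤ f t := hf ht'
      have h2 : f t' ≠ f t := hne
      exact ⟨t', by omega⟩
  obtain ⟨t, ht⟩ := key (f 0 + 1)
  omega

lemma mono_stab {f : ℕ → ℕ} (hf : Monotone f) (hb : ∀ t, f t ≤ b) :
    ∃ T, ∀ t, T ≤ t → f t = f T := by
  by_contra h
  push_neg at h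
  have key : ∀ n, ∃ t, n ≤ f t := by
    intro n
    induction n with
    | zero => exact ⟨0, by omega⟩
    | succ n ih =>
      obtain ⟨t, ht⟩ := ih
      obtain ⟨t', ht', hne⟩ := h t
      have h1 : f t ≤ f t' := hf ht'
      have h2 : f t' ≠ f t := hne
      exact ⟨t', by omega⟩
  obtain ⟨t, ht⟩ := key (b+1)
  have := hb t
  omega

lemma maxIO_rmin_eq (hb : ∀ t, x t ≤ b) : maxIO (rmin x) = minIO (rmin x) := by
  obtain ⟨T, hT⟩ := anti_stab (rmin_antitone (x := x))
  rw [maxIO_eq_of_ev_const hT, minIO_eq_of_ev_const hT]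

lemma minIO_rmax_eq (hb : ∀ t, x t ≤ b) : minIO (rmax x) = maxIO (rmax x) := by
  obtain ⟨T, hT⟩ := mono_stab (rmax_monotone (x := x)) (rmax_le_bound hb)
  rw [maxIO_eq_of_ev_const hT, minIO_eq_of_ev_const hT]

/-- the natural number values of the four classic value functions. -/
noncomputable def natInf (x : ℕ → ℕ) : ℕ := maxIO (rmin x)
noncomputable def natSup (x : ℕ → ℕ) : ℕ := maxIO (rmax x)
noncomputable def natLS (x : ℕ → ℕ) : ℕ := maxIO x
noncomputable def natLI (x : ℕ → ℕ) : ℕ := minIO x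

lemma natInf_le (hb : ∀ t, x t ≤ b) (t : ℕ) : natInf x ≤ x t := by
  refine le_trans ?_ (rmin_le_self t)
  obtain ⟨u, hu, he⟩ := iocc_maxIO (rmin_le_bound hb) t
  rw [natInf, ← he]
  exact rmin_antitone hu

lemma natInf_attained (hb : ∀ t, x t ≤ b) : ∃ s, natInf x = x s := by
  obtain ⟨u, -, he⟩ := iocc_maxIO (rmin_le_bound hb) 0
  obtain ⟨s, -, hs⟩ := rmin_attained (x := x) u
  exact ⟨s, by rw [natInf, ← he, hs]⟩

lemma le_natSup (hb : ∀ t, x t ≤ b) (t : ℕ) : x t ≤ natSup x := by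
  refine le_trans (self_le_rmax t) ?_
  obtain ⟨u, hu, he⟩ := iocc_maxIO (rmax_le_bound hb) t
  rw [natSup, ← he]
  exact rmax_monotone hu

lemma natSup_attained (hb : ∀ t, x t ≤ b) : ∃ s, natSup x = x s := by
  obtain ⟨u, -, he⟩ := iocc_maxIO (rmax_le_bound hb) 0
  obtain ⟨s, -, hs⟩ := rmax_attained (x := x) u
  exact ⟨s, by rw [natSup, ← he, hs]⟩

/-- `vInf` in terms of `natInf`. -/
lemma vInf_eq (hb : ∀ t, x t ≤ b) : vInf x = (natInf x : ℝ) := by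
  obtain ⟨s, hs⟩ := natInf_attained hb
  refine le_antisymm ?_ ?_
  · exact ciInf_le_of_le ⟨0, fun y ⟨n, hn⟩ => hn ▸ Nat.cast_nonneg _⟩ s (by rw [hs])
  · exact le_ciInf (fun t => by exact_mod_cast natInf_le hb t)

lemma vSup_eq (hb : ∀ t, x t ≤ b) : vSup x = (natSup x : ℝ) := by
  obtain ⟨s, hs⟩ := natSup_attained hb
  refine le_antisymm ?_ ?_
  · exact ciSup_le (fun t => by exact_mod_cast le_natSup hb t)
  · refine le_trans (le_of_eq (by rw [hs])) (le_ciSup ⟨(natSup x : ℝ), ?_⟩ s)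
    rintro y ⟨n, hn⟩
    rw [← hn]
    exact Nat.cast_le.mpr (le_natSup hb n)

lemma vLimSup_eq (hb : ∀ t, x t ≤ b) : vLimSup x = (natLS x : ℝ) := by
  have hbd : IsBoundedUnder (· ≤ ·) atTop (fun n => (x n : ℝ)) :=
    ⟨(b : ℝ), by
      rw [Filter.eventually_map]
      exact Eventually.of_forall (fun t => Nat.cast_le.mpr (hb t))⟩
  refine le_antisymm ?_ ?_
  · obtain ⟨T, hT⟩ := ev_le_maxIO hb
    refine limsup_le_of_le (isCoboundedUnder_le_of_le atTop (x := (0:ℝ)) (fun t => Nat.cast_nonneg _)) ?_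
    filter_upwards [Filter.eventually_ge_atTop T] with t ht
    exact_mod_cast hT t ht
  · refine le_limsup_of_frequently_le ?_ hbd
    rw [Filter.frequently_atTop]
    intro T
    obtain ⟨t, ht, he⟩ := iocc_maxIO hb T
    exact ⟨t, ht, by rw [natLS, ← he]⟩

lemma vLimInf_eq (hb : ∀ t, x t ≤ b) : vLimInf x = (natLI x : ℝ) := by
  have hbd : IsBoundedUnder (· ≥ ·) atTop (fun n => (x n : ℝ)) :=
    ⟨(0 : ℝ), by
      rw [Filter.eventually_map]
      exact Eventually.of_forall (fun t => Nat.cast_nonneg _)⟩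
  refine le_antisymm ?_ ?_
  · refine liminf_le_of_frequently_le ?_ hbd
    rw [Filter.frequently_atTop]
    intro T
    obtain ⟨t, ht, he⟩ := iocc_minIO hb T
    exact ⟨t, ht, by rw [natLI, ← he]⟩
  · obtain ⟨T, hT⟩ := ev_minIO_le hb
    refine le_liminf_of_le (isCoboundedUnder_ge_of_le atTop (x := (b:ℝ)) (fun t => Nat.cast_le.mpr (hb t))) ?_
    filter_upwards [Filter.eventually_ge_atTop T] with t ht
    exact_mod_cast hT t ht

end SD


namespace SD

/-- if `S` fails at `a` and holds at `b ≥ a`, it rises somewhere in between. -/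
lemma rise {S : ℕ → Prop} {a b : ℕ} (ha : ¬ S a) (hb : S b) (hab : a ≤ b) :
    ∃ u, a ≤ u ∧ ¬ S u ∧ S (u+1) := by
  by_contra h
  push_neg at h
  have key : ∀ u, a ≤ u → ¬ S u := by
    intro u hu
    induction u with
    | zero => exact (Nat.le_zero.mp hu) ▸ ha
    | succ u ih =>
      rcases Nat.lt_or_ge a (u+1) with h' | h'
      · exact h u (by omega) (ih (by omega))
      · exact (Nat.le_antisymm hu h') ▸ ha
  exact key b hab hb

lemma fall {S : ℕ → Prop} {a b : ℕ} (ha : S a) (hb : ¬ S b) (hab : a ≤ b) :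
    ∃ u, a ≤ u ∧ S u ∧ ¬ S (u+1) := by
  obtain ⟨u, h1, h2, h3⟩ := rise (S := fun n => ¬ S n) (by simpa using ha) hb hab
  exact ⟨u, h1, by tauto, h3⟩

section Toggle

variable {K : ℕ} {x y : ℕ → ℕ} {B : ℕ → ℕ → Prop}

/-- Toggle gadget: detects `minIO y < maxIO x` (i.e. `vLimInf y < vLimSup x`). -/
lemma toggle_iff
    (hx : ∀ t, x t ≤ K) (hy : ∀ t, y t ≤ K)
    (hBs : ∀ k, k ≤ K → ∀ t, B k (t+1) ↔ ((B k t ∧ ¬ (y t < k)) ∨ (¬ B k t ∧ k ≤ x t))) :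
    (∀ T, ∃ t, T ≤ t ∧ ∃ k, k ≤ K ∧ B k t ∧ y t < k) ↔ minIO y < maxIO x := by
  constructor
  · intro hio
    -- pigeonhole a single k occurring infinitely often
    classical
    set zk : ℕ → ℕ := fun t => if h : ∃ k, k ≤ K ∧ B k t ∧ y t < k then h.choose else K+1 with hzk
    have hzb : ∀ t, zk t ≤ K + 1 := by
      intro t
      by_cases h : ∃ k, k ≤ K ∧ B k t ∧ y t < k
      · simp only [hzk, dif_pos h]; exact le_trans h.choose_spec.1 (by omega)
      · simp [hzk, dif_neg h]
    have hfreq : ∀ T, ∃ t, T ≤ t ∧ zk t ≤ K := by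
      intro T
      obtain ⟨t, ht, hk⟩ := hio T
      refine ⟨t, ht, ?_⟩
      simp only [hzk, dif_pos hk]
      exact hk.choose_spec.1
    obtain ⟨k, hkK, hkio⟩ := exists_iocc_P hzb (P := fun k => k ≤ K) hfreq
    have hEk : ∀ T, ∃ t, T ≤ t ∧ B k t ∧ y t < k := by
      intro T
      obtain ⟨t, ht, hz⟩ := hkio T
      have h : ∃ k', k' ≤ K ∧ B k' t ∧ y t < k' := by
        by_contra h
        simp only [hzk, dif_neg h] at hz
        omega
      have := h.choose_spec
      rw [hzk] at hz
      simp only [dif_pos h] at hz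
      exact ⟨t, ht, hz ▸ this.2⟩
    -- io (y < k)
    have h1 : minIO y < k := by
      have : minIO y ≤ k - 1 := by
        refine minIO_le_of_freq hy (fun T => ?_)
        obtain ⟨t, ht, -, hlt⟩ := hEk T
        exact ⟨t, ht, by omega⟩
      obtain ⟨t, -, -, hlt⟩ := hEk 0
      omega
    -- io (k ≤ x)
    have h2 : k ≤ maxIO x := by
      refine le_maxIO_of_freq hx (fun T => ?_)
      obtain ⟨t1, ht1, hB1, hy1⟩ := hEk T
      obtain ⟨t2, ht2, hB2, hy2⟩ := hEk (t1+2)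
      have hB1' : ¬ B k (t1+1) := by
        rw [hBs k hkK t1]
        rintro (⟨-, h⟩ | ⟨h, -⟩)
        · exact h hy1
        · exact h hB1
      obtain ⟨u, hu, hnu, hsu⟩ := rise hB1' hB2 (by omega)
      rw [hBs k hkK u] at hsu
      rcases hsu with ⟨h, -⟩ | ⟨-, h⟩
      · exact absurd h hnu
      · exact ⟨u, by omega, h⟩
    omega
  · intro hlt T
    set k := maxIO x with hk
    have hkK : k ≤ K := by
      obtain ⟨t, -, ht⟩ := iocc_maxIO hx 0
      rw [hk, ← ht]; exact hx t
    -- find B k true at some point ≥ T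
    have hBtrue : ∃ t, T ≤ t ∧ B k t := by
      by_cases hT : B k T
      · exact ⟨T, le_rfl, hT⟩
      · obtain ⟨t1, ht1, hx1⟩ := iocc_maxIO hx T
        by_cases h1 : B k t1
        · exact ⟨t1, ht1, h1⟩
        · refine ⟨t1+1, by omega, ?_⟩
          rw [hBs k hkK t1]
          exact Or.inr ⟨h1, by omega⟩
    obtain ⟨t, hTt, hBt⟩ := hBtrue
    obtain ⟨t2, ht2, hy2⟩ := iocc_minIO hy t
    have hy2' : y t2 < k := by omega
    by_cases hB2 : B k t2
    · exact ⟨t2, by omega, k, hkK, hB2, hy2'⟩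
    · obtain ⟨u, hu, hSu, hnSu⟩ := fall hBt hB2 ht2
      rw [hBs k hkK u] at hnSu
      push_neg at hnSu
      obtain ⟨h1, -⟩ := hnSu
      exact ⟨u, by omega, k, hkK, hSu, h1 hSu⟩

end Toggle

section Reset

variable {K : ℕ} {x y : ℕ → ℕ} {R : ℕ → ℕ → Prop}

/-- `E k t`: the per-step good event for threshold `k` in the reset gadget. -/
def Ev (x y : ℕ → ℕ) (k t : ℕ) : Prop := k ≤ y t ∨ x t < k

/-- Reset gadget: emission happens infinitely often iff `¬ (maxIO y < minIO x)`,
i.e. iff `vLimInf x ≤ vLimSup y`. -/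
lemma reset_iff
    (hx : ∀ t, x t ≤ K) (hy : ∀ t, y t ≤ K)
    (hRs : ∀ k, k ≤ K → ∀ t, R k (t+1) ↔ (¬ (∀ k', k' ≤ K → (R k' t ∨ Ev x y k' t)) ∧ (R k t ∨ Ev x y k t))) :
    (∀ T, ∃ t, T ≤ t ∧ ∀ k, k ≤ K → (R k t ∨ Ev x y k t)) ↔ ¬ (maxIO y < minIO x) := by
  have hEmitDef : ∀ t, (∀ k, k ≤ K → (R k t ∨ Ev x y k t)) ∨ ¬ (∀ k, k ≤ K → (R k t ∨ Ev x y k t)) :=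
    fun t => Classical.em _
  constructor
  · intro hio hcon
    -- k := minIO x; eventually ¬ Ev k, yet io Ev k from emissions
    set k := minIO x with hk
    have hkK : k ≤ K := by
      obtain ⟨t, -, ht⟩ := iocc_minIO hx 0
      rw [hk, ← ht]; exact hx t
    -- io (Ev k): between consecutive emissions
    have hEvio : ∀ T, ∃ t, T ≤ t ∧ Ev x y k t := by
      intro T
      obtain ⟨t1, ht1, hE1⟩ := hio T
      obtain ⟨t2, ht2, hE2⟩ := hio (t1+2)
      rcases hE2 k hkK with hR2 | hEv2
      · have hR1' : ¬ R k (t1+1) := by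
          rw [hRs k hkK t1]
          exact fun h => h.1 hE1
        obtain ⟨u, hu, hnu, hsu⟩ := rise hR1' hR2 (by omega)
        rw [hRs k hkK u] at hsu
        rcases hsu.2 with h | h
        · exact absurd h hnu
        · exact ⟨u, by omega, h⟩
      · exact ⟨t2, by omega, hEv2⟩
    -- eventually ¬ Ev k
    obtain ⟨T1, hT1⟩ := ev_le_maxIO hy
    obtain ⟨T2, hT2⟩ := ev_minIO_le hx
    obtain ⟨t, ht, hEv⟩ := hEvio (max T1 T2)
    rcases hEv with h | h
    · have := hT1 t (le_trans (le_max_left _ _) ht); omega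
    · have := hT2 t (le_trans (le_max_right _ _) ht); rw [hk] at *; omega
  · intro hle T
    -- first: every k ≤ K has io (Ev k)
    have hEvio : ∀ k, k ≤ K → ∀ T', ∃ t, T' ≤ t ∧ Ev x y k t := by
      intro k hkK T'
      rcases le_or_gt k (maxIO y) with h | h
      · obtain ⟨t, ht, he⟩ := iocc_maxIO hy T'
        exact ⟨t, ht, Or.inl (by omega)⟩
      · obtain ⟨t, ht, he⟩ := iocc_minIO hx T'
        refine ⟨t, ht, Or.inr (by omega)⟩
    -- suppose no emission after T: then all R k become true, giving an emission
    by_contra hno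
    push_neg at hno
    have hnoe : ∀ t, T ≤ t → ¬ (∀ k, k ≤ K → (R k t ∨ Ev x y k t)) := by
      intro t ht h
      obtain ⟨k, hk1, hk2⟩ := hno t ht
      rcases h k hk1 with h' | h'
      · exact hk2.1 h'
      · exact hk2.2 h'
    -- R k monotone after T, and becomes true
    have hmono : ∀ k, k ≤ K → ∀ t, T ≤ t → ∀ u, t ≤ u → (R k (t+1) ∨ Ev x y k t) → R k (u+1) := by
      intro k hkK t hTt u htu hRt
      induction u with
      | zero =>
        have : t = 0 := by omega
        subst this
        rcases hRt with h | h
        · exact h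
        · rw [hRs k hkK 0]; exact ⟨hnoe 0 hTt, Or.inr h⟩
      | succ u ih =>
        rcases Nat.lt_or_ge t (u+1) with h' | h'
        · have hRu := ih (by omega)
          rw [hRs k hkK (u+1)]
          exact ⟨hnoe (u+1) (by omega), Or.inl hRu⟩
        · have : t = u + 1 := by omega
          subst this
          rcases hRt with h | h
          · exact h
          · rw [hRs k hkK (u+1)]; exact ⟨hnoe (u+1) hTt, Or.inr h⟩
    classical
    -- for each k pick a time where Ev k happens after T
    choose tk htk1 htk2 using (fun k (hk : k ≤ K) => hEvio k hk T)
    set U := (Finset.range (K+1)).sup (fun k => if hk : k ≤ K then tk k hk else 0) with hU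
    have hallR : ∀ k, k ≤ K → R k (U+1) := by
      intro k hkK
      have h1 : tk k hkK ≤ U := by
        have : (if hk : k ≤ K then tk k hk else 0) ≤ U :=
          Finset.le_sup (f := fun k => if hk : k ≤ K then tk k hk else 0) (by simp; omega)
        simpa [dif_pos hkK] using this
      exact hmono k hkK (tk k hkK) (htk1 k hkK) U h1 (Or.inr (htk2 k hkK))
    have hTU : T ≤ U + 1 := by
      have h0 := htk1 0 (by omega)
      have h1 : (if hk : (0:ℕ) ≤ K then tk 0 hk else 0) ≤ U :=
        Finset.le_sup (f := fun k => if hk : k ≤ K then tk k hk else 0) (by simp)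
      rw [dif_pos (by omega : (0:ℕ) ≤ K)] at h1
      omega
    exact hnoe (U+1) hTU (fun k hk => Or.inl (hallR k hk))

end Reset

end SD


namespace SD
open scoped Classical

noncomputable section

section Lists

variable {α β V : Type}

/-- drop elements until (including-from) the first one with key `w`. -/
def popTo (f : α → V) (w : V) : List α → List α
  | [] => []
  | a :: l => if f a = w then a :: l else popTo f w l

/-- take elements until (excluding) the first one with key `w`. -/
def takeTo (f : α → V) (w : V) : List α → List α
  | [] => []
  | a :: l => if f a = w then [] else a :: takeTo f w l

lemma takeTo_append_popTo (f : α → V) (w : V) (l : List α) :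
    takeTo f w l ++ popTo f w l = l := by
  induction l with
  | nil => rfl
  | cons a l ih =>
    by_cases h : f a = w
    · simp [takeTo, popTo, if_pos h]
    · simp [takeTo, popTo, if_neg h, ih]

lemma popTo_suffix (f : α → V) (w : V) (l : List α) : popTo f w l <:+ l :=
  ⟨takeTo f w l, takeTo_append_popTo f w l⟩

lemma mem_popTo {f : α → V} {w : V} {l : List α} {a : α} (h : a ∈ popTo f w l) : a ∈ l :=
  (popTo_suffix f w l).subset h

lemma mem_takeTo {f : α → V} {w : V} {l : List α} {a : α} (h : a ∈ takeTo f w l) : a ∈ l := by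
  rw [← takeTo_append_popTo f w l]
  exact List.mem_append_left _ h

lemma popTo_head (f : α → V) {w : V} {l : List α} (h : w ∈ l.map f) :
    ∃ a t, popTo f w l = a :: t ∧ f a = w := by
  induction l with
  | nil => simp at h
  | cons a l ih =>
    by_cases h' : f a = w
    · exact ⟨a, l, by simp [popTo, if_pos h'], h'⟩
    · have hm : w ∈ l.map f := by
        simp only [List.map_cons, List.mem_cons] at h
        tauto
      obtain ⟨b, t, he, hb⟩ := ih hm
      exact ⟨b, t, by simp [popTo, if_neg h', he], hb⟩

lemma mem_takeTo_not_mem_popTo {f : α → V} {w : V} {l : List α} (hnd : l.Nodup)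
    {a : α} (ha : a ∈ takeTo f w l) : a ∉ popTo f w l := by
  have h := takeTo_append_popTo f w l
  rw [← h, List.nodup_append] at hnd
  exact fun hc => hnd.2.2 a ha a hc rfl

lemma takeTo_map (f : β → V) (g : α → β) (w : V) (l : List α) :
    takeTo f w (l.map g) = (takeTo (fun a => f (g a)) w l).map g := by
  induction l with
  | nil => rfl
  | cons a l ih =>
    by_cases h : f (g a) = w
    · simp [takeTo, if_pos h]
    · simp [takeTo, if_neg h, ih]

lemma popTo_map (f : β → V) (g : α → β) (w : V) (l : List α) :
    popTo f w (l.map g) = (popTo (fun a => f (g a)) w l).map g := by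
  induction l with
  | nil => rfl
  | cons a l ih =>
    by_cases h : f (g a) = w
    · simp [popTo, if_pos h]
    · simp [popTo, if_neg h, ih]

/-- max of a list of naturals. -/
def lmax (l : List ℕ) : ℕ := l.foldr max 0

lemma le_lmax {l : List ℕ} {a : ℕ} (h : a ∈ l) : a ≤ lmax l := by
  induction l with
  | nil => simp at h
  | cons b l ih =>
    rcases List.mem_cons.mp h with h' | h'
    · subst h'; simp [lmax]
    · exact le_trans (ih h') (by simp [lmax])

lemma lmax_mem {l : List ℕ} (h : l ≠ []) : lmax l ∈ l := by
  induction l with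
  | nil => exact absurd rfl h
  | cons b l ih =>
    by_cases hne : l = []
    · subst hne; simp [lmax]
    · have hm := ih hne
      have hbl : lmax (b :: l) = max b (lmax l) := rfl
      rcases Nat.le_total (lmax l) b with hb | hb
      · rw [hbl, max_eq_left hb]; exact List.mem_cons_self
      · rw [hbl, max_eq_right hb]; exact List.mem_cons_of_mem _ hm

end Lists

section Game

variable {V C R : Type}
variable (v0 : V) (legalC : V → C → Prop) (legalR : V → C → R → Prop)
variable (next : V → C → R → V) (prio : V → C → R → ℕ)

/-- current vertex of a stack node. -/
def cvtx (n : List (ℕ × V)) : V := (n.head?.map Prod.snd).getD v0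

/-- one round of the stack update. -/
def nstep (n : List (ℕ × V)) (c : C) (r : R) : List (ℕ × V) :=
  if next (cvtx v0 n) c r ∈ n.map Prod.snd
  then popTo Prod.snd (next (cvtx v0 n) c r) n
  else (prio (cvtx v0 n) c r, next (cvtx v0 n) c r) :: n

/-- priorities of the cycle that would be closed by the move `(c, r)` at node `n`. -/
def cycPr (n : List (ℕ × V)) (c : C) (r : R) : List ℕ :=
  prio (cvtx v0 n) c r :: (takeTo Prod.snd (next (cvtx v0 n) c r) n).map Prod.fst

/-- Challenger wins the first-cycle game (with the given fuel) from node `n`. -/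
def ChalWinF : ℕ → List (ℕ × V) → Prop
  | 0, _ => False
  | (f+1), n => ∃ c, legalC (cvtx v0 n) c ∧ ∀ r, legalR (cvtx v0 n) c r →
      if next (cvtx v0 n) c r ∈ n.map Prod.snd
      then Odd (lmax (cycPr v0 next prio n c r))
      else ChalWinF f (nstep v0 next prio n c r)

/-- vertex reached after a finite history. -/
def vtxH (h : List (C × R)) : V := h.foldl (fun v cr => next v cr.1 cr.2) v0

/-- stack node after a finite history. -/
def stkH (h : List (C × R)) : List (ℕ × V) :=
  h.foldl (fun n cr => nstep v0 next prio n cr.1 cr.2) [(0, v0)]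

lemma vtxH_snoc (h : List (C × R)) (cr : C × R) :
    vtxH v0 next (h ++ [cr]) = next (vtxH v0 next h) cr.1 cr.2 := by
  simp [vtxH]

lemma stkH_snoc (h : List (C × R)) (cr : C × R) :
    stkH v0 next prio (h ++ [cr]) = nstep v0 next prio (stkH v0 next prio h) cr.1 cr.2 := by
  simp [stkH]

lemma stkH_ne (h : List (C × R)) : stkH v0 next prio h ≠ [] := by
  induction h using List.reverseRecOn with
  | nil => simp [stkH]
  | append_singleton h cr ih =>
    rw [stkH_snoc]
    unfold nstep
    split
    · rename_i hmem
      obtain ⟨a, t, he, -⟩ := popTo_head Prod.snd hmem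
      rw [he]; simp
    · simp

lemma cvtx_stkH (h : List (C × R)) :
    cvtx v0 (stkH v0 next prio h) = vtxH v0 next h := by
  induction h using List.reverseRecOn with
  | nil => simp [stkH, vtxH, cvtx]
  | append_singleton h cr ih =>
    rw [stkH_snoc, vtxH_snoc]
    unfold nstep
    split
    · rename_i hmem
      obtain ⟨a, t, he, ha⟩ := popTo_head Prod.snd hmem
      rw [he, ← ih]
      simp [cvtx, ha]
    · rw [← ih]
      simp [cvtx]

end Game

section Play

variable {V C R : Type}
variable (v0 : V) (legalC : V → C → Prop) (legalR : V → C → R → Prop)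
variable (next : V → C → R → V) (prio : V → C → R → ℕ)

/-- history of the first `t` rounds of a play. -/
def pref (p : ℕ → C × R) (t : ℕ) : List (C × R) := (List.range t).map p

lemma pref_succ (p : ℕ → C × R) (t : ℕ) : pref p (t+1) = pref p t ++ [p t] := by
  simp [pref, List.range_succ]

/-- vertex after `t` rounds. -/
def vtxP (p : ℕ → C × R) (t : ℕ) : V := vtxH v0 next (pref p t)

/-- node (stack) after `t` rounds. -/
def nodeP (p : ℕ → C × R) (t : ℕ) : List (ℕ × V) := stkH v0 next prio (pref p t)

/-- priority of round `t`. -/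
def prsP (p : ℕ → C × R) (t : ℕ) : ℕ := prio (vtxP v0 next p t) (p t).1 (p t).2

lemma vtxP_zero (p : ℕ → C × R) : vtxP v0 next p 0 = v0 := rfl

lemma vtxP_succ (p : ℕ → C × R) (t : ℕ) :
    vtxP v0 next p (t+1) = next (vtxP v0 next p t) (p t).1 (p t).2 := by
  rw [vtxP, pref_succ, vtxH_snoc]; rfl

lemma nodeP_succ (p : ℕ → C × R) (t : ℕ) :
    nodeP v0 next prio p (t+1) = nstep v0 next prio (nodeP v0 next prio p t) (p t).1 (p t).2 := by
  rw [nodeP, pref_succ, stkH_snoc]; rfl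

lemma cvtx_nodeP (p : ℕ → C × R) (t : ℕ) :
    cvtx v0 (nodeP v0 next prio p t) = vtxP v0 next p t :=
  cvtx_stkH v0 next prio (pref p t)

/-- the stack of round-times. -/
def tstk (p : ℕ → C × R) : ℕ → List ℕ
  | 0 => [0]
  | (t+1) =>
      if vtxP v0 next p (t+1) ∈ (tstk p t).map (vtxP v0 next p)
      then popTo (vtxP v0 next p) (vtxP v0 next p (t+1)) (tstk p t)
      else (t+1) :: tstk p t

/-- the priority of the in-edge of the stack element with time `j`. -/
def inP (p : ℕ → C × R) (j : ℕ) : ℕ := if j = 0 then 0 else prsP v0 next prio p (j-1)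

/-- the full stack entry of time `j`. -/
def entry (p : ℕ → C × R) (j : ℕ) : ℕ × V := (inP v0 next prio p j, vtxP v0 next p j)

lemma inP_succ (p : ℕ → C × R) (t : ℕ) :
    inP v0 next prio p (t+1) = prsP v0 next prio p t := rfl

lemma nodeP_eq (p : ℕ → C × R) : ∀ t,
    nodeP v0 next prio p t = (tstk v0 next p t).map (entry v0 next prio p) := by
  intro t
  induction t with
  | zero =>
    have h1 : inP v0 next prio p 0 = 0 := rfl
    have h2 : vtxP v0 next p 0 = v0 := rfl
    simp [nodeP, pref, stkH, tstk, entry, h1, h2]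
  | succ t ih =>
    rw [nodeP_succ, tstk]
    have hsnd : (nodeP v0 next prio p t).map Prod.snd = (tstk v0 next p t).map (vtxP v0 next p) := by
      rw [ih, List.map_map]; rfl
    have hcv : cvtx v0 (nodeP v0 next prio p t) = vtxP v0 next p t := cvtx_nodeP _ _ _ _ _
    have hnxt : next (cvtx v0 (nodeP v0 next prio p t)) (p t).1 (p t).2 = vtxP v0 next p (t+1) := by
      rw [hcv, ← vtxP_succ v0 next p t]
    have hpr : prio (cvtx v0 (nodeP v0 next prio p t)) (p t).1 (p t).2
        = inP v0 next prio p (t+1) := by rw [hcv]; rfl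
    unfold nstep
    rw [hnxt, hsnd, hpr]
    by_cases hmem : vtxP v0 next p (t+1) ∈ (tstk v0 next p t).map (vtxP v0 next p)
    · rw [if_pos hmem, if_pos hmem, ih, popTo_map]
      rfl
    · rw [if_neg hmem, if_neg hmem, ih]
      rfl

lemma tstk_mem_le (p : ℕ → C × R) : ∀ t j, j ∈ tstk v0 next p t → j ≤ t := by
  intro t
  induction t with
  | zero => intro j hj; simp [tstk] at hj; omega
  | succ t ih =>
    intro j hj
    rw [tstk] at hj
    split at hj
    · exact le_trans (ih j (mem_popTo hj)) (by omega)
    · rcases List.mem_cons.mp hj with h | h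
      · omega
      · exact le_trans (ih j h) (by omega)

lemma tstk_nodupV (p : ℕ → C × R) : ∀ t, ((tstk v0 next p t).map (vtxP v0 next p)).Nodup := by
  intro t
  induction t with
  | zero => simp [tstk]
  | succ t ih =>
    rw [tstk]
    split
    · rename_i hmem
      have hs : (popTo (vtxP v0 next p) (vtxP v0 next p (t+1)) (tstk v0 next p t)).Sublist
          (tstk v0 next p t) := (popTo_suffix _ _ _).sublist
      exact List.Nodup.sublist (hs.map _) ih
    · rename_i hmem
      simp only [List.map_cons, List.nodup_cons]
      exact ⟨hmem, ih⟩

lemma tstk_nodup (p : ℕ → C × R) (t : ℕ) : (tstk v0 next p t).Nodup :=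
  (tstk_nodupV v0 next p t).of_map

/-- a pop happens at time `t+1`. -/
def popAt (p : ℕ → C × R) (t : ℕ) : Prop :=
  vtxP v0 next p (t+1) ∈ (tstk v0 next p t).map (vtxP v0 next p)

/-- the times of the cycle closed at time `t+1`. -/
def cycT (p : ℕ → C × R) (t : ℕ) : List ℕ :=
  (t+1) :: takeTo (vtxP v0 next p) (vtxP v0 next p (t+1)) (tstk v0 next p t)

lemma tstk_succ_pop {p : ℕ → C × R} {t : ℕ} (h : popAt v0 next p t) :
    tstk v0 next p (t+1) = popTo (vtxP v0 next p) (vtxP v0 next p (t+1)) (tstk v0 next p t) := by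
  rw [tstk]
  exact if_pos h

lemma tstk_succ_push {p : ℕ → C × R} {t : ℕ} (h : ¬ popAt v0 next p t) :
    tstk v0 next p (t+1) = (t+1) :: tstk v0 next p t := by
  rw [tstk]
  exact if_neg h

lemma cycT_mem_le {p : ℕ → C × R} {t j : ℕ} (h : j ∈ cycT v0 next p t) : j ≤ t + 1 := by
  rcases List.mem_cons.mp h with h' | h'
  · omega
  · exact le_trans (tstk_mem_le v0 next p t j (mem_takeTo h')) (by omega)

lemma stay {p : ℕ → C × R} {t j : ℕ} (h1 : j ∈ tstk v0 next p t)
    (h2 : j ∉ tstk v0 next p (t+1)) : popAt v0 next p t ∧ j ∈ cycT v0 next p t := by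
  by_cases hp : popAt v0 next p t
  · refine ⟨hp, ?_⟩
    rw [tstk_succ_pop v0 next hp] at h2
    have := takeTo_append_popTo (vtxP v0 next p) (vtxP v0 next p (t+1)) (tstk v0 next p t)
    rw [← this] at h1
    rcases List.mem_append.mp h1 with h | h
    · exact List.mem_cons_of_mem _ h
    · exact absurd h h2
  · rw [tstk_succ_push v0 next hp] at h2
    exact absurd (List.mem_cons_of_mem _ h1) h2

lemma gone {p : ℕ → C × R} {t j : ℕ} (hp : popAt v0 next p t) (hj : j ∈ cycT v0 next p t) :
    ∀ u, t + 1 ≤ u → j ∉ tstk v0 next p u := by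
  have base : j ∉ tstk v0 next p (t+1) := by
    rw [tstk_succ_pop v0 next hp]
    rcases List.mem_cons.mp hj with h' | h'
    · intro hc
      have := tstk_mem_le v0 next p t j (mem_popTo hc)
      omega
    · exact mem_takeTo_not_mem_popTo (tstk_nodup v0 next p t) h'
  intro u hu
  induction u with
  | zero => omega
  | succ u ih =>
    rcases Nat.lt_or_ge t (u) with h' | h'
    · have hnu := ih (by omega)
      intro hc
      rw [tstk] at hc
      split at hc
      · exact hnu (mem_popTo hc)
      · rcases List.mem_cons.mp hc with h'' | h''
        · have := cycT_mem_le v0 next hj; omega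
        · exact hnu h''
    · have : t = u := by omega
      subst this
      exact base

lemma cyc_unique {p : ℕ → C × R} {t t' j : ℕ} (hp : popAt v0 next p t) (hp' : popAt v0 next p t')
    (hj : j ∈ cycT v0 next p t) (hj' : j ∈ cycT v0 next p t') : t = t' := by
  by_contra hne
  rcases Nat.lt_or_ge t t' with h | h
  · rcases List.mem_cons.mp hj' with h' | h'
    · have := cycT_mem_le v0 next hj; omega
    · exact gone v0 next hp hj t' (by omega) (mem_takeTo h')
  · have h : t' < t := by omega
    rcases List.mem_cons.mp hj with h' | h'
    · have := cycT_mem_le v0 next hj'; omega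
    · exact gone v0 next hp' hj' t (by omega) (mem_takeTo h')

lemma persist {p : ℕ → C × R} {j : ℕ} (h0 : j ∈ tstk v0 next p j)
    (h1 : ∀ s, ¬ (popAt v0 next p s ∧ j ∈ cycT v0 next p s)) :
    ∀ u, j ≤ u → j ∈ tstk v0 next p u := by
  intro u hu
  induction u with
  | zero => exact (Nat.le_zero.mp hu) ▸ h0
  | succ u ih =>
    rcases Nat.lt_or_ge j (u+1) with h' | h'
    · have hju := ih (by omega)
      by_contra hc
      exact h1 u (stay v0 next hju hc)
    · exact (by omega : j = u + 1) ▸ h0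

/-- the cycle priorities as seen from the abstract node. -/
lemma cycPr_eq (p : ℕ → C × R) (t : ℕ) :
    cycPr v0 next prio (nodeP v0 next prio p t) (p t).1 (p t).2
      = (cycT v0 next p t).map (inP v0 next prio p) := by
  unfold cycPr cycT
  have hcv : cvtx v0 (nodeP v0 next prio p t) = vtxP v0 next p t := cvtx_nodeP _ _ _ _ _
  have hnxt : next (cvtx v0 (nodeP v0 next prio p t)) (p t).1 (p t).2 = vtxP v0 next p (t+1) := by
    rw [hcv, ← vtxP_succ v0 next p t]
  have hpr : prio (cvtx v0 (nodeP v0 next prio p t)) (p t).1 (p t).2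
      = inP v0 next prio p (t+1) := by rw [hcv]; rfl
  rw [hnxt, hpr, nodeP_eq, takeTo_map]
  simp [List.map_map]
  rfl

/-- the pop condition as seen from the abstract node. -/
lemma popCond_eq (p : ℕ → C × R) (t : ℕ) :
    (next (cvtx v0 (nodeP v0 next prio p t)) (p t).1 (p t).2
        ∈ (nodeP v0 next prio p t).map Prod.snd) ↔ popAt v0 next p t := by
  have hcv : cvtx v0 (nodeP v0 next prio p t) = vtxP v0 next p t := cvtx_nodeP _ _ _ _ _
  have hnxt : next (cvtx v0 (nodeP v0 next prio p t)) (p t).1 (p t).2 = vtxP v0 next p (t+1) := by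
    rw [hcv, ← vtxP_succ v0 next p t]
  rw [hnxt, nodeP_eq, List.map_map]
  rfl

/-- **Claim B**: if every closed cycle has max-priority of parity `e`,
then the maximal infinitely occurring priority has parity `e`. -/
theorem claimB (p : ℕ → C × R) {PB nV : ℕ}
    (hPB : ∀ t, prsP v0 next prio p t ≤ PB)
    (hcard : ∀ l : List V, l.Nodup → l.length ≤ nV)
    {e : ℕ} (he : e < 2)
    (hcyc : ∀ t, popAt v0 next p t →
      lmax ((cycT v0 next p t).map (inP v0 next prio p)) % 2 = e) :
    maxIO (prsP v0 next prio p) % 2 = e := by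
  classical
  by_contra hne
  set d := maxIO (prsP v0 next prio p) with hd
  have hio : IOcc (prsP v0 next prio p) d := iocc_maxIO hPB
  obtain ⟨T0, hT0⟩ := ev_le_maxIO hPB
  -- the set of never-popped times is finite
  set NP : Set ℕ := {j | ∀ u, j ≤ u → j ∈ tstk v0 next p u} with hNP
  have hNPfin : NP.Finite := by
    by_contra hinf
    have hinf' : NP.Infinite := hinf
    obtain ⟨F, hF, hFcard⟩ := hinf'.exists_subset_card_eq (nV + 1)
    have hFne : F.Nonempty := by
      rw [← Finset.card_pos, hFcard]; omega
    set U := F.max' hFne with hU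
    have hsub : F ⊆ (tstk v0 next p U).toFinset := by
      intro j hj
      rw [List.mem_toFinset]
      exact (hF hj) U (F.le_max' j hj)
    have h1 : F.card ≤ (tstk v0 next p U).toFinset.card := Finset.card_le_card hsub
    have h2 : (tstk v0 next p U).toFinset.card ≤ (tstk v0 next p U).length :=
      (tstk v0 next p U).toFinset_card_le
    have h3 : (tstk v0 next p U).length ≤ nV := by
      have := hcard ((tstk v0 next p U).map (vtxP v0 next p)) (tstk_nodupV v0 next p U)
      simpa using this
    omega
  -- d-rounds whose entry is eventually popped
  set S : Set ℕ := {t | prsP v0 next prio p t = d ∧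
      ∃ s, popAt v0 next p s ∧ (t+1) ∈ cycT v0 next p s} with hS
  have hS'inf : {t | prsP v0 next prio p t = d}.Infinite := by
    intro hfin
    obtain ⟨M, hM⟩ := hfin.bddAbove
    obtain ⟨t, ht, he'⟩ := hio (M+1)
    have : t ≤ M := hM (by exact he')
    omega
  have hSinf : S.Infinite := by
    have hsub : {t | prsP v0 next prio p t = d} \ S ⊆ (fun t => t + 1) ⁻¹' NP := by
      intro t ⟨ht1, ht2⟩
      simp only [Set.mem_preimage]
      by_cases hp : popAt v0 next p t
      · exfalso
        exact ht2 ⟨ht1, t, hp, List.mem_cons_self⟩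
      · have hmem : (t+1) ∈ tstk v0 next p (t+1) := by
          rw [tstk_succ_push v0 next hp]
          exact List.mem_cons_self
        have hnopop : ∀ s, ¬ (popAt v0 next p s ∧ (t+1) ∈ cycT v0 next p s) := by
          intro s hc
          exact ht2 ⟨ht1, s, hc.1, hc.2⟩
        exact persist v0 next hmem hnopop
    have hpre : ((fun t => t + 1) ⁻¹' NP).Finite :=
      hNPfin.preimage ((add_left_injective 1).injOn)
    have hSS := hS'inf.diff (Set.Finite.subset hpre hsub)
    refine Set.Infinite.mono ?_ hSS
    intro t ht
    rcases ht with ⟨ht1, ht2⟩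
    by_contra h
    exact ht2 ⟨ht1, h⟩
  -- map each t ∈ S to the pop time of its entry
  set φ : ℕ → ℕ := fun t =>
    if h : ∃ s, popAt v0 next p s ∧ (t+1) ∈ cycT v0 next p s then h.choose else 0 with hφ
  have hφspec : ∀ t ∈ S, popAt v0 next p (φ t) ∧ (t+1) ∈ cycT v0 next p (φ t) := by
    intro t ht
    obtain ⟨-, hex⟩ := ht
    simp only [hφ, dif_pos hex]
    exact hex.choose_spec
  have hBinf : (φ '' S).Infinite := by
    intro hfin
    have hsub2 : S ⊆ ⋃ s ∈ φ '' S, {t | (t+1) ∈ cycT v0 next p s} := by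
      intro t ht
      have := (hφspec t ht).2
      simp only [Set.mem_iUnion, Set.mem_setOf_eq]
      exact ⟨φ t, ⟨t, ht, rfl⟩, this⟩
    have hfin2 : (⋃ s ∈ φ '' S, {t | (t+1) ∈ cycT v0 next p s}).Finite := by
      refine Set.Finite.biUnion hfin (fun s _ => ?_)
      refine Set.Finite.subset (Set.finite_Iic (s+1)) (fun t ht => ?_)
      have := cycT_mem_le v0 next ht
      simp only [Set.mem_Iic]
      omega
    exact hSinf (hfin2.subset hsub2)
  -- from each pop time in the image extract a high-priority old entry
  have hkey : ∀ s ∈ φ '' S, ∃ j, j ∈ cycT v0 next p s ∧ j ≤ T0 := by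
    intro s hs
    obtain ⟨t, htS, hts⟩ := hs
    obtain ⟨hpop, hmem⟩ := hφspec t htS
    rw [hts] at hpop hmem
    have hval : inP v0 next prio p (t+1) = d := htS.1
    have hd_le : d ≤ lmax ((cycT v0 next p s).map (inP v0 next prio p)) := by
      rw [← hval]
      exact le_lmax (List.mem_map_of_mem hmem)
    have hpar := hcyc s hpop
    have hgt : d < lmax ((cycT v0 next p s).map (inP v0 next prio p)) := by
      rcases lt_or_eq_of_le hd_le with h | h
      · exact h
      · rw [← h] at hpar; omega
    have hne2 : (cycT v0 next p s).map (inP v0 next prio p) ≠ [] := by simp [cycT]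
    obtain ⟨j, hj, hjval⟩ := List.mem_map.mp (lmax_mem hne2)
    have hj0 : j ≠ 0 := by
      intro h0
      rw [h0] at hjval
      have : inP v0 next prio p 0 = 0 := rfl
      omega
    have hjeq : inP v0 next prio p j = prsP v0 next prio p (j-1) := by
      simp [inP, hj0]
    have hjT0 : j - 1 < T0 := by
      by_contra hge
      push_neg at hge
      have := hT0 (j-1) hge
      omega
    exact ⟨j, hj, by omega⟩
  set ψ : ℕ → ℕ := fun s =>
    if h : ∃ j, j ∈ cycT v0 next p s ∧ j ≤ T0 then h.choose else 0 with hψ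
  have hψspec : ∀ s ∈ φ '' S, ψ s ∈ cycT v0 next p s ∧ ψ s ≤ T0 := by
    intro s hs
    have hex := hkey s hs
    simp only [hψ, dif_pos hex]
    exact hex.choose_spec
  have hpopim : ∀ s ∈ φ '' S, popAt v0 next p s := by
    rintro s ⟨t, htS, hts⟩
    exact hts ▸ (hφspec t htS).1
  have hinj : Set.InjOn ψ (φ '' S) := by
    intro s hs s' hs' heq
    exact cyc_unique v0 next (hpopim s hs) (hpopim s' hs')
      (hψspec s hs).1 (heq ▸ (hψspec s' hs').1)
  have himfin : (ψ '' (φ '' S)).Finite := by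
    refine Set.Finite.subset (Set.finite_Iic T0) ?_
    rintro j ⟨s, hs, rfl⟩
    exact (hψspec s hs).2
  exact hBinf (Set.Finite.of_finite_image himfin hinj)

end Play

section Extract

variable {V C R : Type}
variable (v0 : V) (legalC : V → C → Prop) (legalR : V → C → R → Prop)
variable (next : V → C → R → V) (prio : V → C → R → ℕ)

/-- Simulator's invariant: all (nonempty) suffixes of the stack are not Challenger-wins. -/
def InvS (nV : ℕ) (n : List (ℕ × V)) : Prop :=
  n ≠ [] ∧ (n.map Prod.snd).Nodup ∧
  ∀ m : List (ℕ × V), m ≠ [] → m <:+ n →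
    ¬ ChalWinF v0 legalC legalR next prio (nV + 1 - m.length) m

/-- Challenger's invariant. -/
def InvC (nV : ℕ) (n : List (ℕ × V)) : Prop :=
  n ≠ [] ∧ (n.map Prod.snd).Nodup ∧
  ∀ m : List (ℕ × V), m ≠ [] → m <:+ n →
    ChalWinF v0 legalC legalR next prio (nV + 1 - m.length) m

lemma InvS_suffix {nV : ℕ} {n m : List (ℕ × V)}
    (h : InvS v0 legalC legalR next prio nV n) (hs : m <:+ n) (hne : m ≠ []) :
    InvS v0 legalC legalR next prio nV m :=
  ⟨hne, h.2.1.sublist (hs.sublist.map _), fun m' hne' hs' => h.2.2 m' hne' (hs'.trans hs)⟩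

lemma InvC_suffix {nV : ℕ} {n m : List (ℕ × V)}
    (h : InvC v0 legalC legalR next prio nV n) (hs : m <:+ n) (hne : m ≠ []) :
    InvC v0 legalC legalR next prio nV m :=
  ⟨hne, h.2.1.sublist (hs.sublist.map _), fun m' hne' hs' => h.2.2 m' hne' (hs'.trans hs)⟩

lemma len_le {nV : ℕ} (hcard : ∀ l : List V, l.Nodup → l.length ≤ nV)
    {n : List (ℕ × V)} (hnd : (n.map Prod.snd).Nodup) : n.length ≤ nV := by
  have := hcard (n.map Prod.snd) hnd
  simpa using this

lemma sim_step {nV : ℕ} (hcard : ∀ l : List V, l.Nodup → l.length ≤ nV)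
    {n : List (ℕ × V)} (hInv : InvS v0 legalC legalR next prio nV n)
    {c : C} (hc : legalC (cvtx v0 n) c) :
    ∃ r, legalR (cvtx v0 n) c r ∧
      (next (cvtx v0 n) c r ∈ n.map Prod.snd →
        ¬ Odd (lmax (cycPr v0 next prio n c r))) ∧
      (next (cvtx v0 n) c r ∉ n.map Prod.snd →
        InvS v0 legalC legalR next prio nV (nstep v0 next prio n c r)) := by
  obtain ⟨hne, hnd, hall⟩ := hInv
  have hlen : n.length ≤ nV := len_le hcard hnd
  have hlen1 : 1 ≤ n.length := by
    cases n with
    | nil => exact absurd rfl hne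
    | cons a l => simp
  have hW := hall n hne (List.suffix_refl n)
  have hfuel : nV + 1 - n.length = (nV - n.length) + 1 := by omega
  rw [hfuel] at hW
  rw [ChalWinF] at hW
  push_neg at hW
  obtain ⟨r, hr, hbr⟩ := hW c hc
  refine ⟨r, hr, ?_, ?_⟩
  · intro hpop hodd
    rw [if_pos hpop] at hbr
    exact hbr hodd
  · intro hpop
    rw [if_neg hpop] at hbr
    have hchild : nstep v0 next prio n c r
        = (prio (cvtx v0 n) c r, next (cvtx v0 n) c r) :: n := by
      unfold nstep
      exact if_neg hpop
    rw [hchild]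
    refine ⟨by simp, by simp only [List.map_cons, List.nodup_cons]; exact ⟨hpop, hnd⟩, ?_⟩
    intro m hne' hs'
    rcases List.suffix_cons_iff.mp hs' with h' | h'
    · subst h'
      have : nV + 1 - ((prio (cvtx v0 n) c r, next (cvtx v0 n) c r) :: n).length
          = nV - n.length := by simp only [List.length_cons]; omega
      rw [this]
      rw [hchild] at hbr
      exact hbr
    · exact hall m hne' h'

lemma chal_step {nV : ℕ} (hcard : ∀ l : List V, l.Nodup → l.length ≤ nV)
    {n : List (ℕ × V)} (hInv : InvC v0 legalC legalR next prio nV n) :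
    ∃ c, legalC (cvtx v0 n) c ∧ ∀ r, legalR (cvtx v0 n) c r →
      (next (cvtx v0 n) c r ∈ n.map Prod.snd →
        Odd (lmax (cycPr v0 next prio n c r))) ∧
      (next (cvtx v0 n) c r ∉ n.map Prod.snd →
        InvC v0 legalC legalR next prio nV (nstep v0 next prio n c r)) := by
  obtain ⟨hne, hnd, hall⟩ := hInv
  have hlen : n.length ≤ nV := len_le hcard hnd
  have hlen1 : 1 ≤ n.length := by
    cases n with
    | nil => exact absurd rfl hne
    | cons a l => simp
  have hW := hall n hne (List.suffix_refl n)
  have hfuel : nV + 1 - n.length = (nV - n.length) + 1 := by omega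
  rw [hfuel, ChalWinF] at hW
  obtain ⟨c, hc, hbr⟩ := hW
  refine ⟨c, hc, fun r hr => ⟨?_, ?_⟩⟩
  · intro hpop
    have := hbr r hr
    rwa [if_pos hpop] at this
  · intro hpop
    have hb := hbr r hr
    rw [if_neg hpop] at hb
    have hchild : nstep v0 next prio n c r
        = (prio (cvtx v0 n) c r, next (cvtx v0 n) c r) :: n := by
      unfold nstep
      exact if_neg hpop
    rw [hchild]
    refine ⟨by simp, by simp only [List.map_cons, List.nodup_cons]; exact ⟨hpop, hnd⟩, ?_⟩
    intro m hne' hs'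
    rcases List.suffix_cons_iff.mp hs' with h' | h'
    · subst h'
      have : nV + 1 - ((prio (cvtx v0 n) c r, next (cvtx v0 n) c r) :: n).length
          = nV - n.length := by simp only [List.length_cons]; omega
      rw [this]
      rw [hchild] at hb
      exact hb
    · exact hall m hne' h'

lemma root_node (p : ℕ → C × R) : nodeP v0 next prio p 0 = [(0, v0)] := rfl

theorem sim_extract {nV PB : ℕ}
    (hcard : ∀ l : List V, l.Nodup → l.length ≤ nV)
    (hPB : ∀ v c r, prio v c r ≤ PB)
    (htot : ∀ v c, ∃ r, legalR v c r)
    (hroot : ¬ ChalWinF v0 legalC legalR next prio nV [(0, v0)]) :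
    ∃ g : List (C × R) → C → R,
      (∀ h c, legalR (vtxH v0 next h) c (g h c)) ∧
      ∀ p : ℕ → C × R,
        (∀ t, legalC (vtxP v0 next p t) (p t).1) →
        (∀ t, (p t).2 = g (pref p t) (p t).1) →
        maxIO (prsP v0 next prio p) % 2 = 0 := by
  classical
  have hg : ∀ (h : List (C × R)) (c : C), ∃ r,
      legalR (vtxH v0 next h) c r ∧
      (legalC (vtxH v0 next h) c →
        InvS v0 legalC legalR next prio nV (stkH v0 next prio h) →
        ((next (cvtx v0 (stkH v0 next prio h)) c r ∈ (stkH v0 next prio h).map Prod.snd →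
            ¬ Odd (lmax (cycPr v0 next prio (stkH v0 next prio h) c r))) ∧
         (next (cvtx v0 (stkH v0 next prio h)) c r ∉ (stkH v0 next prio h).map Prod.snd →
            InvS v0 legalC legalR next prio nV (nstep v0 next prio (stkH v0 next prio h) c r)))) := by
    intro h c
    by_cases hc : legalC (vtxH v0 next h) c ∧ InvS v0 legalC legalR next prio nV (stkH v0 next prio h)
    · have hc' : legalC (cvtx v0 (stkH v0 next prio h)) c := by
        rw [cvtx_stkH]; exact hc.1
      obtain ⟨r, h1, h2, h3⟩ := sim_step v0 legalC legalR next prio hcard hc.2 hc'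
      refine ⟨r, by rwa [cvtx_stkH] at h1, fun _ _ => ⟨h2, h3⟩⟩
    · obtain ⟨r, hr⟩ := htot (vtxH v0 next h) c
      exact ⟨r, hr, fun h1 h2 => absurd ⟨h1, h2⟩ hc⟩
  choose g hg1 hg2 using hg
  refine ⟨g, hg1, ?_⟩
  intro p hlegal hfollow
  have hInvP : ∀ t, InvS v0 legalC legalR next prio nV (nodeP v0 next prio p t) := by
    intro t
    induction t with
    | zero =>
      rw [root_node]
      refine ⟨by simp, by simp, ?_⟩
      intro m hne' hs'
      rcases List.suffix_cons_iff.mp hs' with h' | h'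
      · subst h'
        simpa using hroot
      · rw [List.suffix_nil] at h'
        exact absurd h' hne'
    | succ t ih =>
      have hstep := hg2 (pref p t) (p t).1 (hlegal t) ih
      rw [← hfollow t] at hstep
      have hnode : nodeP v0 next prio p (t+1)
          = nstep v0 next prio (nodeP v0 next prio p t) (p t).1 (p t).2 := nodeP_succ _ _ _ _ _
      by_cases hpop : next (cvtx v0 (nodeP v0 next prio p t)) (p t).1 (p t).2
          ∈ (nodeP v0 next prio p t).map Prod.snd
      · -- pop: new node is a suffix of the old one
        have hsfx : nodeP v0 next prio p (t+1) <:+ nodeP v0 next prio p t := by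
          rw [hnode]
          unfold nstep
          rw [if_pos hpop]
          exact popTo_suffix _ _ _
        refine InvS_suffix v0 legalC legalR next prio ih hsfx ?_
        have := stkH_ne v0 next prio (pref p (t+1))
        exact this
      · rw [hnode]
        exact hstep.2 hpop
  have hcycE : ∀ t, popAt v0 next p t →
      lmax ((cycT v0 next p t).map (inP v0 next prio p)) % 2 = 0 := by
    intro t hpop
    have hstep := hg2 (pref p t) (p t).1 (hlegal t) (hInvP t)
    rw [← hfollow t] at hstep
    have hpop' : next (cvtx v0 (nodeP v0 next prio p t)) (p t).1 (p t).2
        ∈ (nodeP v0 next prio p t).map Prod.snd := (popCond_eq v0 next prio p t).mpr hpop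
    have hodd := hstep.1 hpop'
    have hnn : stkH v0 next prio (pref p t) = nodeP v0 next prio p t := rfl
    rw [hnn, cycPr_eq] at hodd
    rw [Nat.odd_iff] at hodd
    omega
  exact claimB v0 next prio p (fun t => hPB _ _ _) hcard (by omega) hcycE

theorem chal_extract {nV PB : ℕ}
    (hcard : ∀ l : List V, l.Nodup → l.length ≤ nV)
    (hPB : ∀ v c r, prio v c r ≤ PB)
    (htotC : ∀ v, ∃ c, legalC v c)
    (hroot : ChalWinF v0 legalC legalR next prio nV [(0, v0)]) :
    ∃ st : List (C × R) → C,
      (∀ h, legalC (vtxH v0 next h) (st h)) ∧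
      ∀ p : ℕ → C × R,
        (∀ t, (p t).1 = st (pref p t)) →
        (∀ t, legalR (vtxP v0 next p t) (p t).1 (p t).2) →
        maxIO (prsP v0 next prio p) % 2 = 1 := by
  classical
  have hg : ∀ (h : List (C × R)), ∃ c,
      legalC (vtxH v0 next h) c ∧
      (InvC v0 legalC legalR next prio nV (stkH v0 next prio h) →
        ∀ r, legalR (cvtx v0 (stkH v0 next prio h)) c r →
        ((next (cvtx v0 (stkH v0 next prio h)) c r ∈ (stkH v0 next prio h).map Prod.snd →
            Odd (lmax (cycPr v0 next prio (stkH v0 next prio h) c r))) ∧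
         (next (cvtx v0 (stkH v0 next prio h)) c r ∉ (stkH v0 next prio h).map Prod.snd →
            InvC v0 legalC legalR next prio nV (nstep v0 next prio (stkH v0 next prio h) c r)))) := by
    intro h
    by_cases hc : InvC v0 legalC legalR next prio nV (stkH v0 next prio h)
    · obtain ⟨c, h1, h2⟩ := chal_step v0 legalC legalR next prio hcard hc
      exact ⟨c, by rwa [cvtx_stkH] at h1, fun _ => h2⟩
    · obtain ⟨c, hcl⟩ := htotC (vtxH v0 next h)
      exact ⟨c, hcl, fun h1 => absurd h1 hc⟩
  choose st hg1 hg2 using hg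
  refine ⟨st, hg1, ?_⟩
  intro p hfollow hlegal
  have hInvP : ∀ t, InvC v0 legalC legalR next prio nV (nodeP v0 next prio p t) := by
    intro t
    induction t with
    | zero =>
      rw [root_node]
      refine ⟨by simp, by simp, ?_⟩
      intro m hne' hs'
      rcases List.suffix_cons_iff.mp hs' with h' | h'
      · subst h'
        simpa using hroot
      · rw [List.suffix_nil] at h'
        exact absurd h' hne'
    | succ t ih =>
      have hcv : cvtx v0 (stkH v0 next prio (pref p t)) = vtxP v0 next p t :=
        cvtx_stkH v0 next prio (pref p t)
      have hstep := hg2 (pref p t) ih (p t).2 (by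
        rw [hcv, ← hfollow t]
        exact hlegal t)
      rw [← hfollow t] at hstep
      have hnode : nodeP v0 next prio p (t+1)
          = nstep v0 next prio (nodeP v0 next prio p t) (p t).1 (p t).2 := nodeP_succ _ _ _ _ _
      by_cases hpop : next (cvtx v0 (nodeP v0 next prio p t)) (p t).1 (p t).2
          ∈ (nodeP v0 next prio p t).map Prod.snd
      · have hsfx : nodeP v0 next prio p (t+1) <:+ nodeP v0 next prio p t := by
          rw [hnode]
          unfold nstep
          rw [if_pos hpop]
          exact popTo_suffix _ _ _
        refine InvC_suffix v0 legalC legalR next prio ih hsfx ?_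
        exact stkH_ne v0 next prio (pref p (t+1))
      · rw [hnode]
        exact hstep.2 hpop
  have hcycO : ∀ t, popAt v0 next p t →
      lmax ((cycT v0 next p t).map (inP v0 next prio p)) % 2 = 1 := by
    intro t hpop
    have hcv : cvtx v0 (stkH v0 next prio (pref p t)) = vtxP v0 next p t :=
      cvtx_stkH v0 next prio (pref p t)
    have hstep := hg2 (pref p t) (hInvP t) (p t).2 (by
      rw [hcv, ← hfollow t]
      exact hlegal t)
    rw [← hfollow t] at hstep
    have hpop' : next (cvtx v0 (nodeP v0 next prio p t)) (p t).1 (p t).2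
        ∈ (nodeP v0 next prio p t).map Prod.snd := (popCond_eq v0 next prio p t).mpr hpop
    have hodd := hstep.1 hpop'
    have hnn : stkH v0 next prio (pref p t) = nodeP v0 next prio p t := rfl
    rw [hnn, cycPr_eq] at hodd
    rwa [Nat.odd_iff] at hodd
  exact claimB v0 next prio p (fun t => hPB _ _ _) hcard (by omega) hcycO

end Extract

end

end SD


namespace SD
open scoped Classical

noncomputable section

section Machine

variable (N : ℕ)

abbrev Mem := Fin (N+1) × Fin (N+1) × Fin (N+1) × Fin (N+1) ×
  (Fin (N+1) → Bool) × (Fin (N+1) → Bool)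

def toF (n : ℕ) : Fin (N+1) := ⟨min n N, by omega⟩

def m0 : Mem N :=
  (⟨N, by omega⟩, ⟨0, by omega⟩, ⟨N, by omega⟩, ⟨0, by omega⟩, fun _ => false, fun _ => false)

/-- reset-gadget emission (evaluated on pre-update bits). -/
def emitR (m : Mem N) (x y : ℕ) : Prop :=
  ∀ k : Fin (N+1), m.2.2.2.2.2 k = true ∨ ((k : ℕ) ≤ y ∨ x < (k : ℕ))

/-- toggle-gadget emission (evaluated on pre-update bits). -/
def emitT (m : Mem N) (y : ℕ) : Prop :=
  ∃ k : Fin (N+1), m.2.2.2.2.1 k = true ∧ y < (k : ℕ)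

def updMem (m : Mem N) (x y : ℕ) : Mem N :=
  ( toF N (min (m.1 : ℕ) x),
    toF N (max (m.2.1 : ℕ) x),
    toF N (min (m.2.2.1 : ℕ) y),
    toF N (max (m.2.2.2.1 : ℕ) y),
    fun k => if m.2.2.2.2.1 k = true then decide (¬ (y < (k:ℕ))) else decide ((k:ℕ) ≤ x),
    fun k => if emitR N m x y then false else (m.2.2.2.2.2 k || decide ((k:ℕ) ≤ y ∨ x < (k:ℕ))) )

def memrun (x y : ℕ → ℕ) : ℕ → Mem N
  | 0 => m0 N
  | t+1 => updMem N (memrun x y t) (x t) (y t)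

variable {x y : ℕ → ℕ}

lemma memrun_m1 (hx : ∀ t, x t ≤ N) : ∀ t, ((memrun N x y (t+1)).1 : ℕ) = rmin x t := by
  intro t
  induction t with
  | zero =>
    show ((toF N (min ((m0 N).1 : ℕ) (x 0)) : Fin (N+1)) : ℕ) = x 0
    have := hx 0
    simp [toF, m0]
    omega
  | succ t ih =>
    show ((toF N (min ((memrun N x y (t+1)).1 : ℕ) (x (t+1))) : Fin (N+1)) : ℕ) = _
    rw [show rmin x (t+1) = min (rmin x t) (x (t+1)) from rfl, ← ih]
    have h1 : rmin x (t+1) ≤ N := rmin_le_bound hx (t+1)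
    have h2 : ((memrun N x y (t+1)).1 : ℕ) = rmin x t := ih
    simp [toF]
    omega

lemma memrun_M1 (hx : ∀ t, x t ≤ N) : ∀ t, ((memrun N x y (t+1)).2.1 : ℕ) = rmax x t := by
  intro t
  induction t with
  | zero =>
    show ((toF N (max ((m0 N).2.1 : ℕ) (x 0)) : Fin (N+1)) : ℕ) = x 0
    have := hx 0
    simp [toF, m0]
    omega
  | succ t ih =>
    show ((toF N (max ((memrun N x y (t+1)).2.1 : ℕ) (x (t+1))) : Fin (N+1)) : ℕ) = _
    rw [show rmax x (t+1) = max (rmax x t) (x (t+1)) from rfl, ← ih]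
    have h1 : max ((memrun N x y (t+1)).2.1 : ℕ) (x (t+1)) ≤ N := by
      rw [ih]; exact rmax_le_bound hx (t+1)
    simp [toF]
    omega

lemma memrun_m2 (hy : ∀ t, y t ≤ N) : ∀ t, ((memrun N x y (t+1)).2.2.1 : ℕ) = rmin y t := by
  intro t
  induction t with
  | zero =>
    show ((toF N (min ((m0 N).2.2.1 : ℕ) (y 0)) : Fin (N+1)) : ℕ) = y 0
    have := hy 0
    simp [toF, m0]
    omega
  | succ t ih =>
    show ((toF N (min ((memrun N x y (t+1)).2.2.1 : ℕ) (y (t+1))) : Fin (N+1)) : ℕ) = _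
    rw [show rmin y (t+1) = min (rmin y t) (y (t+1)) from rfl, ← ih]
    have h1 : min ((memrun N x y (t+1)).2.2.1 : ℕ) (y (t+1)) ≤ N := by
      rw [ih]; exact rmin_le_bound hy (t+1)
    simp [toF]
    omega

lemma memrun_M2 (hy : ∀ t, y t ≤ N) : ∀ t, ((memrun N x y (t+1)).2.2.2.1 : ℕ) = rmax y t := by
  intro t
  induction t with
  | zero =>
    show ((toF N (max ((m0 N).2.2.2.1 : ℕ) (y 0)) : Fin (N+1)) : ℕ) = y 0
    have := hy 0
    simp [toF, m0]
    omega
  | succ t ih =>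
    show ((toF N (max ((memrun N x y (t+1)).2.2.2.1 : ℕ) (y (t+1))) : Fin (N+1)) : ℕ) = _
    rw [show rmax y (t+1) = max (rmax y t) (y (t+1)) from rfl, ← ih]
    have h1 : max ((memrun N x y (t+1)).2.2.2.1 : ℕ) (y (t+1)) ≤ N := by
      rw [ih]; exact rmax_le_bound hy (t+1)
    simp [toF]
    omega

/-- toggle bit dynamics, as needed by `toggle_iff`. -/
lemma memrun_bt {k : ℕ} (hk : k ≤ N) (t : ℕ) :
    ((memrun N x y (t+1)).2.2.2.2.1 ⟨k, by omega⟩ = true) ↔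
      ((((memrun N x y t).2.2.2.2.1 ⟨k, by omega⟩ = true) ∧ ¬ (y t < k)) ∨
       (¬ ((memrun N x y t).2.2.2.2.1 ⟨k, by omega⟩ = true) ∧ k ≤ x t)) := by
  show ((updMem N (memrun N x y t) (x t) (y t)).2.2.2.2.1 ⟨k, by omega⟩ = true) ↔ _
  by_cases hb : (memrun N x y t).2.2.2.2.1 ⟨k, by omega⟩ = true
  · simp [updMem, hb]
  · simp [updMem, hb]

/-- reset bit dynamics, as needed by `reset_iff`. -/
lemma memrun_rb {k : ℕ} (hk : k ≤ N) (t : ℕ) :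
    ((memrun N x y (t+1)).2.2.2.2.2 ⟨k, by omega⟩ = true) ↔
      (¬ emitR N (memrun N x y t) (x t) (y t) ∧
        (((memrun N x y t).2.2.2.2.2 ⟨k, by omega⟩ = true) ∨ (k ≤ y t ∨ x t < k))) := by
  show ((updMem N (memrun N x y t) (x t) (y t)).2.2.2.2.2 ⟨k, by omega⟩ = true) ↔ _
  by_cases he : emitR N (memrun N x y t) (x t) (y t)
  · simp [updMem, he]
  · simp [updMem, he]

end Machine

section Arena

open QAut

variable {σ QA QB : Type}
variable (A : QAut σ QA) (B : QAut σ QB) (N : ℕ)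

abbrev GV (QA QB : Type) (N : ℕ) := QA × QB × Mem N


def gv0 : GV QA QB N := (A.init, B.init, m0 N)

def glegalC' (A : QAut σ QA) (B : QAut σ QB) (N : ℕ) (v : GV QA QB N) (c : σ × QA) : Prop :=
  A.Δ v.1 c.1 c.2

def glegalR' (A : QAut σ QA) (B : QAut σ QB) (N : ℕ) (v : GV QA QB N) (c : σ × QA) (r : QB) : Prop :=
  B.Δ v.2.1 c.1 r

def gnext (v : GV QA QB N) (c : σ × QA) (r : QB) : GV QA QB N :=
  (c.2, r, updMem N v.2.2 (A.μ v.1 c.1 c.2) (B.μ v.2.1 c.1 r))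

def gprio (prioF : Mem N → ℕ → ℕ → ℕ) (v : GV QA QB N) (c : σ × QA) (r : QB) : ℕ :=
  prioF v.2.2 (A.μ v.1 c.1 c.2) (B.μ v.2.1 c.1 r)

/-- the vertex run of any play, in terms of its components. -/
lemma play_vtx (p : ℕ → (σ × QA) × QB)
    (r1 : ℕ → QA) (r2 : ℕ → QB) (hr1 : r1 0 = A.init) (hr2 : r2 0 = B.init)
    (hp1 : ∀ t, (p t).1.2 = r1 (t+1)) (hp2 : ∀ t, (p t).2 = r2 (t+1)) :
    ∀ t, vtxP (gv0 A B N) (gnext A B N) p t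
      = (r1 t, r2 t,
         memrun N (fun t => A.μ (r1 t) ((p t).1.1) (r1 (t+1)))
                  (fun t => B.μ (r2 t) ((p t).1.1) (r2 (t+1))) t) := by
  intro t
  induction t with
  | zero =>
    rw [vtxP_zero]
    rw [gv0, hr1, hr2]
    rfl
  | succ t ih =>
    rw [vtxP_succ, ih]
    show (_, _, updMem N _ _ _) = _
    rw [memrun]
    have e1 := hp1 t
    have e2 := hp2 t
    simp [gnext, e1, e2]

lemma hlast_hist {A : QAut σ QA} (r : A.Resolver) (w : ℕ → σ) :
    ∀ t, A.hlast (r.hist w t) = r.run w t := by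
  intro t
  cases t with
  | zero => simp [QAut.hlast, Resolver.hist, Resolver.run]
  | succ t =>
    show A.hlast (r.hist w t ++ [(w t, r.f (r.hist w t) (w t))]) = _
    rw [QAut.hlast, List.getLast?_concat]
    rfl

end Arena

section Main

open QAut

variable {σ QA QB : Type}

theorem main_generic [Fintype σ] [Nonempty σ] [Fintype QA] [Fintype QB]
    (A : QAut σ QA) (B : QAut σ QB) (ν₁ ν₂ : (ℕ → ℕ) → ℝ) (N : ℕ)
    (hNA : ∀ q a q', A.μ q a q' ≤ N) (hNB : ∀ p a p', B.μ p a p' ≤ N)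
    (prioF : Mem N → ℕ → ℕ → ℕ) (PB : ℕ)
    (hPB : ∀ m x y, prioF m x y ≤ PB)
    (hcorr : ∀ x y : ℕ → ℕ, (∀ t, x t ≤ N) → (∀ t, y t ≤ N) →
      (maxIO (fun t => prioF (memrun N x y t) (x t) (y t)) % 2 = 1 ↔ ν₂ y < ν₁ x))
    (hsim : QAut.Simulates ν₁ ν₂ A B) (f : A.Resolver) :
    ∃ g : B.Resolver, ∀ w : ℕ → σ, A.val ν₁ f w ≤ B.val ν₂ g w := by
  classical
  have hcard : ∀ l : List (GV QA QB N), l.Nodup → l.length ≤ Fintype.card (GV QA QB N) :=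
    fun l hl => hl.length_le_card
  have hPB' : ∀ v c r, gprio A B N prioF v c r ≤ PB := fun v c r => hPB _ _ _
  have htot : ∀ v c, ∃ r, glegalR' A B N v c r := fun v c => B.total v.2.1 c.1
  have htotC : ∀ v : GV QA QB N, ∃ c, glegalC' A B N v c := by
    intro v
    obtain ⟨q', hq⟩ := A.total v.1 (Classical.arbitrary σ)
    exact ⟨(Classical.arbitrary σ, q'), hq⟩
  -- Challenger does not win the first-cycle game
  have hroot : ¬ ChalWinF (gv0 A B N) (glegalC' A B N) (glegalR' A B N) (gnext A B N)
      (gprio A B N prioF) (Fintype.card (GV QA QB N)) [(0, gv0 A B N)] := by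
    intro hW
    obtain ⟨st, hst1, hst2⟩ := chal_extract (gv0 A B N) (glegalC' A B N) (glegalR' A B N)
      (gnext A B N) (gprio A B N prioF) hcard hPB' htotC hW
    set recon : List (QA × QB) → List ((σ × QA) × QB) := fun l =>
      (l.drop 1).foldl (fun acc e => acc ++ [(st acc, e.2)]) [] with hreconD
    have hjunk : ∀ l : List (QA × QB), ∃ c : σ × QA,
        A.Δ ((l.getLast?.getD (A.init, B.init)).1) c.1 c.2 := by
      intro l
      obtain ⟨q', hq⟩ := A.total _ (Classical.arbitrary σ)
      exact ⟨(Classical.arbitrary σ, q'), hq⟩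
    set τf : List (QA × QB) → σ × QA := fun l =>
      if A.Δ ((l.getLast?.getD (A.init, B.init)).1) (st (recon l)).1 (st (recon l)).2
      then st (recon l) else (hjunk l).choose with hτfD
    have hτcons : ∀ l, A.Δ ((l.getLast?.getD (A.init, B.init)).1) (τf l).1 (τf l).2 := by
      intro l
      rw [hτfD]
      by_cases h : A.Δ ((l.getLast?.getD (A.init, B.init)).1) (st (recon l)).1 (st (recon l)).2
      · simpa [if_pos h] using h
      · simpa [if_neg h] using (hjunk l).choose_spec
    apply hsim
    refine ⟨⟨τf, hτcons⟩, ?_⟩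
    intro o
    set p : ℕ → (σ × QA) × QB := fun t => ((o.w t, o.r1 (t+1)), o.r2 (t+1)) with hpD
    set X : ℕ → ℕ := fun t => A.μ (o.r1 t) (o.w t) (o.r1 (t+1)) with hXD
    set Y : ℕ → ℕ := fun t => B.μ (o.r2 t) (o.w t) (o.r2 (t+1)) with hYD
    have hvtx : ∀ t, vtxP (gv0 A B N) (gnext A B N) p t = (o.r1 t, o.r2 t, memrun N X Y t) :=
      play_vtx A B N p o.r1 o.r2 o.init1 o.init2 (fun t => rfl) (fun t => rfl)
    set pairs : ℕ → List (QA × QB) := fun n => (List.range (n+1)).map (fun i => (o.r1 i, o.r2 i))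
      with hpairsD
    have hlastpairs : ∀ n, (pairs n).getLast? = some (o.r1 n, o.r2 n) := by
      intro n
      rw [hpairsD]
      simp only [List.range_succ, List.map_append]
      exact List.getLast?_concat
    have hbranch : ∀ n, recon (pairs n) = pref p n → τf (pairs n) = st (pref p n) := by
      intro n hrec
      have hcond : A.Δ (((pairs n).getLast?.getD (A.init, B.init)).1)
          (st (recon (pairs n))).1 (st (recon (pairs n))).2 := by
        rw [hrec, hlastpairs n]
        have h1 := hst1 (pref p n)
        have h2 : (vtxH (gv0 A B N) (gnext A B N) (pref p n)).1 = o.r1 n := by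
          have := hvtx n
          rw [vtxP] at this
          rw [this]
        rw [glegalC', h2] at h1
        exact h1
      rw [hτfD]
      simp only [if_pos hcond]
      rw [hrec]
    have hrec : ∀ n, recon (pairs n) = pref p n := by
      intro n
      induction n with
      | zero =>
        rw [hreconD, hpairsD]
        rfl
      | succ n ih =>
        have hp1 : pairs (n+1) = pairs n ++ [(o.r1 (n+1), o.r2 (n+1))] := by
          rw [hpairsD]
          simp [List.range_succ]
        have hlen : 1 ≤ (pairs n).length := by
          rw [hpairsD]; simp
        have hdrop : (pairs (n+1)).drop 1 = (pairs n).drop 1 ++ [(o.r1 (n+1), o.r2 (n+1))] := by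
          rw [hp1, List.drop_append_of_le_length hlen]
        have : recon (pairs (n+1))
            = recon (pairs n) ++ [(st (recon (pairs n)), o.r2 (n+1))] := by
          rw [hreconD]
          simp only []
          rw [hdrop, List.foldl_append]
          rfl
        rw [this, ih]
        have hchal : τf (pairs n) = (o.w n, o.r1 (n+1)) := o.chal n
        have hst : st (pref p n) = (o.w n, o.r1 (n+1)) := by
          rw [← hbranch n ih]
          exact hchal
        rw [hst, pref_succ]
    have hfollow : ∀ t, (p t).1 = st (pref p t) := by
      intro t
      have hchal : τf (pairs t) = (o.w t, o.r1 (t+1)) := o.chal t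
      show (o.w t, o.r1 (t+1)) = st (pref p t)
      rw [← hchal]
      exact hbranch t (hrec t)
    have hlegalR : ∀ t, glegalR' A B N (vtxP (gv0 A B N) (gnext A B N) p t) (p t).1 (p t).2 := by
      intro t
      rw [glegalR', hvtx t]
      exact o.sim t
    have hmax := hst2 p hfollow hlegalR
    have hprs : prsP (gv0 A B N) (gnext A B N) (gprio A B N prioF) p
        = fun t => prioF (memrun N X Y t) (X t) (Y t) := by
      funext t
      rw [prsP, gprio, hvtx t]
    rw [hprs] at hmax
    have hXb : ∀ t, X t ≤ N := fun t => hNA _ _ _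
    have hYb : ∀ t, Y t ≤ N := fun t => hNB _ _ _
    exact ((hcorr X Y hXb hYb).mp hmax)
  -- Simulator side
  obtain ⟨gS, hgS1, hgS2⟩ := sim_extract (gv0 A B N) (glegalC' A B N) (glegalR' A B N)
    (gnext A B N) (gprio A B N prioF) hcard hPB' htot hroot
  set bfold : List (σ × QB) → List ((σ × QA) × QB) × List (σ × QA) := fun h =>
    h.foldl (fun acc e => (acc.1 ++ [((e.1, f.f acc.2 e.1), e.2)],
                           acc.2 ++ [(e.1, f.f acc.2 e.1)])) ([], []) with hbfoldD
  have hbsnoc : ∀ (h : List (σ × QB)) (e : σ × QB),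
      bfold (h ++ [e]) = ((bfold h).1 ++ [((e.1, f.f (bfold h).2 e.1), e.2)],
                          (bfold h).2 ++ [(e.1, f.f (bfold h).2 e.1)]) := by
    intro h e
    rw [hbfoldD]
    simp only [List.foldl_append, List.foldl_cons, List.foldl_nil]
  set gfun : List (σ × QB) → σ → QB := fun h a => gS (bfold h).1 (a, f.f (bfold h).2 a)
    with hgfunD
  have hBl : ∀ h : List (σ × QB),
      (vtxH (gv0 A B N) (gnext A B N) (bfold h).1).2.1 = B.hlast h := by
    intro h
    induction h using List.reverseRecOn with
    | nil =>
      show (gv0 A B N).2.1 = B.hlast []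
      rw [QAut.hlast]
      rfl
    | append_singleton h e ih =>
      rw [hbsnoc h e, vtxH_snoc]
      show e.2 = B.hlast (h ++ [e])
      rw [QAut.hlast, List.getLast?_concat]
      rfl
  have gcons : ∀ h a, B.Δ (B.hlast h) a (gfun h a) := by
    intro h a
    have h1 := hgS1 (bfold h).1 (a, f.f (bfold h).2 a)
    rw [glegalR'] at h1
    rw [hgfunD, ← hBl h]
    exact h1
  refine ⟨⟨gfun, gcons⟩, ?_⟩
  intro w
  set g : B.Resolver := ⟨gfun, gcons⟩ with hgD
  set p : ℕ → (σ × QA) × QB :=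
    fun t => ((w t, f.f (f.hist w t) (w t)), gfun (g.hist w t) (w t)) with hpD
  have hvtx : ∀ t, vtxP (gv0 A B N) (gnext A B N) p t
      = (f.run w t, g.run w t, memrun N (f.wt w) (g.wt w) t) := by
    have h0 := play_vtx A B N p (f.run w) (g.run w) rfl rfl (fun t => rfl) (fun t => rfl)
    intro t
    rw [h0 t]
    rfl
  have hahist : ∀ t, (bfold (g.hist w t)).2 = f.hist w t := by
    intro t
    induction t with
    | zero => rfl
    | succ t ih =>
      show (bfold (g.hist w t ++ [(w t, g.f (g.hist w t) (w t))])).2 = _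
      rw [hbsnoc, ih]
      rfl
  have hrecon : ∀ t, (bfold (g.hist w t)).1 = pref p t := by
    intro t
    induction t with
    | zero => rfl
    | succ t ih =>
      show (bfold (g.hist w t ++ [(w t, g.f (g.hist w t) (w t))])).1 = _
      rw [hbsnoc, ih, hahist t, pref_succ]
  have hlegalC : ∀ t, glegalC' A B N (vtxP (gv0 A B N) (gnext A B N) p t) (p t).1 := by
    intro t
    rw [glegalC', hvtx t]
    show A.Δ (f.run w t) (w t) (f.f (f.hist w t) (w t))
    rw [← hlast_hist f w t]
    exact f.consistent (f.hist w t) (w t)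
  have hfollow : ∀ t, (p t).2 = gS (pref p t) (p t).1 := by
    intro t
    show gfun (g.hist w t) (w t) = _
    rw [hgfunD]
    simp only []
    rw [hrecon t, hahist t]
  have hmax := hgS2 p hlegalC hfollow
  have hprs : prsP (gv0 A B N) (gnext A B N) (gprio A B N prioF) p
      = fun t => prioF (memrun N (f.wt w) (g.wt w) t) (f.wt w t) (g.wt w t) := by
    funext t
    rw [prsP, gprio, hvtx t]
    rfl
  rw [hprs] at hmax
  have hXb : ∀ t, f.wt w t ≤ N := fun t => hNA _ _ _
  have hYb : ∀ t, g.wt w t ≤ N := fun t => hNB _ _ _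
  have hnot : ¬ (ν₂ (g.wt w) < ν₁ (f.wt w)) := by
    rw [← hcorr (f.wt w) (g.wt w) hXb hYb]
    omega
  rw [QAut.val, QAut.val]
  exact le_of_not_gt hnot

end Main

end

end SD


namespace SD
open scoped Classical

noncomputable section

section Corr

variable {N : ℕ}

lemma minIO_le_bound {z : ℕ → ℕ} (hz : ∀ t, z t ≤ N) : minIO z ≤ N := by
  obtain ⟨t, -, ht⟩ := iocc_minIO hz 0
  rw [← ht]; exact hz t

lemma corr_of_max {U V : ℕ → ℕ} {a b : ℝ}
    (hU : ∀ t, U t ≤ N) (hV : ∀ t, V t ≤ N)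
    (hval1 : a = (maxIO U : ℝ)) (hval2 : b = (maxIO V : ℝ)) :
    (maxIO (fun t => max (2 * U t + 1) (2 * V t + 2)) % 2 = 1 ↔ b < a) := by
  rw [← Nat.odd_iff, odd_maxIO_scheme hU hV, hval1, hval2, Nat.cast_lt]

lemma corr_of_flip {U V : ℕ → ℕ} {a b : ℝ}
    (hU : ∀ t, U t ≤ N) (hV : ∀ t, V t ≤ N)
    (hval1 : a = (minIO U : ℝ)) (hval2 : b = (minIO V : ℝ)) :
    (maxIO (fun t => max (2 * (N - V t) + 1) (2 * (N - U t) + 2)) % 2 = 1 ↔ b < a) := by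
  have hU' : ∀ t, N - U t ≤ N := fun t => by omega
  have hV' : ∀ t, N - V t ≤ N := fun t => by omega
  rw [← Nat.odd_iff, odd_maxIO_scheme hV' hU',
    maxIO_flip hU hU, maxIO_flip hV hV, hval1, hval2, Nat.cast_lt]
  have h1 : minIO U ≤ N := minIO_le_bound hU
  have h2 : minIO V ≤ N := minIO_le_bound hV
  omega

lemma corr_of_toggle (Emit : ℕ → Prop) (c : Prop)
    (hEm : (∀ T, ∃ t, T ≤ t ∧ Emit t) ↔ c) :
    (maxIO (fun t => if Emit t then 3 else 2) % 2 = 1 ↔ c) := by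
  by_cases hio : ∀ T, ∃ t, T ≤ t ∧ Emit t
  · rw [maxIO_if (by omega) hio]
    exact iff_of_true rfl (hEm.mp hio)
  · have hev : ∃ T0, ∀ t, T0 ≤ t → ¬ Emit t := by
      push_neg at hio
      obtain ⟨T, hT⟩ := hio
      exact ⟨T, fun t ht hc => hT t ht hc⟩
    obtain ⟨T0, hT0⟩ := hev
    rw [maxIO_if_not hT0]
    exact iff_of_false (by omega) (fun hc => hio (hEm.mpr hc))

lemma corr_of_reset (Emit : ℕ → Prop) (c : Prop)
    (hEm : (∀ T, ∃ t, T ≤ t ∧ Emit t) ↔ ¬ c) :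
    (maxIO (fun t => if Emit t then 2 else 1) % 2 = 1 ↔ c) := by
  by_cases hio : ∀ T, ∃ t, T ≤ t ∧ Emit t
  · rw [maxIO_if (by omega) hio]
    exact iff_of_false (by omega) (fun hc => (hEm.mp hio) hc)
  · have hev : ∃ T0, ∀ t, T0 ≤ t → ¬ Emit t := by
      push_neg at hio
      obtain ⟨T, hT⟩ := hio
      exact ⟨T, fun t ht hc => hT t ht hc⟩
    obtain ⟨T0, hT0⟩ := hev
    rw [maxIO_if_not hT0]
    exact iff_of_true rfl (not_not.mp (fun hc => hio (hEm.mpr hc)))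

/-- bridge for the toggle gadget along a memory run. -/
lemma toggle_bridge {x y : ℕ → ℕ} (hx : ∀ t, x t ≤ N) (hy : ∀ t, y t ≤ N) :
    ((∀ T, ∃ t, T ≤ t ∧ emitT N (memrun N x y t) (y t)) ↔ minIO y < maxIO x) := by
  have htoF : ∀ (k : ℕ) (hk : k ≤ N), toF N k = (⟨k, Nat.lt_succ_of_le hk⟩ : Fin (N+1)) := by
    intro k hk
    apply Fin.ext
    show min k N = k
    omega
  have hBs : ∀ k, k ≤ N → ∀ t,
      ((memrun N x y (t+1)).2.2.2.2.1 (toF N k) = true) ↔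
      ((((memrun N x y t).2.2.2.2.1 (toF N k) = true) ∧ ¬ (y t < k)) ∨
       (¬ ((memrun N x y t).2.2.2.2.1 (toF N k) = true) ∧ k ≤ x t)) := by
    intro k hk t
    rw [htoF k hk]
    exact memrun_bt N hk t
  have key := toggle_iff (K := N)
    (B := fun k t => (memrun N x y t).2.2.2.2.1 (toF N k) = true) hx hy hBs
  rw [← key]
  have hEq : ∀ t, (emitT N (memrun N x y t) (y t)) ↔
      (∃ k, k ≤ N ∧ ((memrun N x y t).2.2.2.2.1 (toF N k) = true) ∧ y t < k) := by
    intro t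
    constructor
    · rintro ⟨k, hk1, hk2⟩
      have hkN : (k : ℕ) ≤ N := by omega
      refine ⟨(k : ℕ), hkN, ?_, hk2⟩
      have he : toF N (k : ℕ) = k := by
        apply Fin.ext
        show min (k : ℕ) N = (k : ℕ)
        omega
      rw [he]
      exact hk1
    · rintro ⟨k, hk, h1, h2⟩
      refine ⟨toF N k, h1, ?_⟩
      rw [htoF k hk]
      exact h2
  constructor
  · intro h T
    obtain ⟨t, ht, he⟩ := h T
    exact ⟨t, ht, (hEq t).mp he⟩
  · intro h T
    obtain ⟨t, ht, he⟩ := h T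
    exact ⟨t, ht, (hEq t).mpr he⟩

/-- bridge for the reset gadget along a memory run. -/
lemma reset_bridge {x y : ℕ → ℕ} (hx : ∀ t, x t ≤ N) (hy : ∀ t, y t ≤ N) :
    ((∀ T, ∃ t, T ≤ t ∧ emitR N (memrun N x y t) (x t) (y t)) ↔ ¬ (maxIO y < minIO x)) := by
  have htoF : ∀ (k : ℕ) (hk : k ≤ N), toF N k = (⟨k, Nat.lt_succ_of_le hk⟩ : Fin (N+1)) := by
    intro k hk
    apply Fin.ext
    show min k N = k
    omega
  have hEq : ∀ t, emitR N (memrun N x y t) (x t) (y t)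
      ↔ ∀ k, k ≤ N →
        (((memrun N x y t).2.2.2.2.2 (toF N k) = true) ∨ Ev x y k t) := by
    intro t
    constructor
    · intro h k hk
      have := h ⟨k, by omega⟩
      rcases this with h' | h'
      · left
        rw [htoF k hk]
        exact h'
      · right
        exact h'
    · intro h k
      have hkN : (k : ℕ) ≤ N := by omega
      have := h (k : ℕ) hkN
      rcases this with h' | h'
      · left
        have he : toF N (k : ℕ) = k := by
          apply Fin.ext
          show min (k : ℕ) N = (k : ℕ)
          omega
        rw [he] at h'
        exact h'
      · right
        exact h'
  have hRs : ∀ k, k ≤ N → ∀ t,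
      ((memrun N x y (t+1)).2.2.2.2.2 (toF N k) = true)
      ↔ (¬ (∀ k', k' ≤ N →
            (((memrun N x y t).2.2.2.2.2 (toF N k') = true) ∨ Ev x y k' t)) ∧
         (((memrun N x y t).2.2.2.2.2 (toF N k) = true) ∨ Ev x y k t)) := by
    intro k hk t
    rw [htoF k hk]
    rw [memrun_rb N hk t]
    constructor
    · rintro ⟨h1, h2⟩
      exact ⟨fun hc => h1 ((hEq t).mpr hc), h2⟩
    · rintro ⟨h1, h2⟩
      exact ⟨fun hc => h1 ((hEq t).mp hc), h2⟩
  have key := reset_iff (K := N)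
    (R := fun k t => (memrun N x y t).2.2.2.2.2 (toF N k) = true) hx hy hRs
  rw [← key]
  constructor
  · intro h T
    obtain ⟨t, ht, he⟩ := h T
    exact ⟨t, ht, (hEq t).mp he⟩
  · intro h T
    obtain ⟨t, ht, he⟩ := h T
    exact ⟨t, ht, (hEq t).mpr he⟩

end Corr

section Final

open QAut

variable {σ QA QB : Type}

def wB [Fintype σ] [Fintype QA] [Fintype QB] (A : QAut σ QA) (B : QAut σ QB) : ℕ :=
  (((Finset.univ : Finset (QA × σ × QA)).sup fun z => A.μ z.1 z.2.1 z.2.2) ⊔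
   ((Finset.univ : Finset (QB × σ × QB)).sup fun z => B.μ z.1 z.2.1 z.2.2))

lemma wB_A [Fintype σ] [Fintype QA] [Fintype QB] (A : QAut σ QA) (B : QAut σ QB)
    (q : QA) (a : σ) (q' : QA) : A.μ q a q' ≤ wB A B := by
  refine le_trans ?_ le_sup_left
  exact Finset.le_sup (f := fun z : QA × σ × QA => A.μ z.1 z.2.1 z.2.2)
    (Finset.mem_univ (q, a, q'))

lemma wB_B [Fintype σ] [Fintype QA] [Fintype QB] (A : QAut σ QA) (B : QAut σ QB)
    (p : QB) (a : σ) (p' : QB) : B.μ p a p' ≤ wB A B := by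
  refine le_trans ?_ le_sup_right
  exact Finset.le_sup (f := fun z : QB × σ × QB => B.μ z.1 z.2.1 z.2.2)
    (Finset.mem_univ (p, a, p'))


theorem simulation_implies_strategic_dominance' {σ QA QB : Type} [Fintype σ]
    [Nonempty σ] [Fintype QA] [Fintype QB] (A : QAut σ QA) (B : QAut σ QB)
    (ν₁ ν₂ : (ℕ → ℕ) → ℝ) (h₁ : IsClassic ν₁) (h₂ : IsClassic ν₂)
    (hsim : QAut.Simulates ν₁ ν₂ A B) :
    ∀ f : A.Resolver, ∃ g : B.Resolver, ∀ w : ℕ → σ,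
      A.val ν₁ f w ≤ B.val ν₂ g w := by
  classical
  intro f
  set N := wB A B with hNdef
  have hNA : ∀ q a q', A.μ q a q' ≤ N := fun q a q' => wB_A A B q a q'
  have hNB : ∀ p a p', B.μ p a p' ≤ N := fun p a p' => wB_B A B p a p'
  have hb1 : ∀ (m : Mem N) (x y : ℕ), ((updMem N m x y).1 : ℕ) ≤ N :=
    fun m x y => Nat.lt_succ_iff.mp (updMem N m x y).1.isLt
  have hb2 : ∀ (m : Mem N) (x y : ℕ), ((updMem N m x y).2.1 : ℕ) ≤ N :=
    fun m x y => Nat.lt_succ_iff.mp (updMem N m x y).2.1.isLt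
  have hb3 : ∀ (m : Mem N) (x y : ℕ), ((updMem N m x y).2.2.1 : ℕ) ≤ N :=
    fun m x y => Nat.lt_succ_iff.mp (updMem N m x y).2.2.1.isLt
  have hb4 : ∀ (m : Mem N) (x y : ℕ), ((updMem N m x y).2.2.2.1 : ℕ) ≤ N :=
    fun m x y => Nat.lt_succ_iff.mp (updMem N m x y).2.2.2.1.isLt
  rcases h₁ with h₁ | h₁ | h₁ | h₁ <;> rcases h₂ with h₂ | h₂ | h₂ | h₂ <;>
    subst h₁ <;> subst h₂
  -- (Inf, Inf)
  · refine main_generic A B _ _ N hNA hNB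
      (fun m x y => max (2 * ((updMem N m x y).1 : ℕ) + 1)
                        (2 * ((updMem N m x y).2.2.1 : ℕ) + 2)) (2*N+4)
      (fun m x y => by have := hb1 m x y; have := hb3 m x y; omega) ?_ hsim f
    intro x y hx hy
    have hseq : (fun t => max (2 * ((updMem N (memrun N x y t) (x t) (y t)).1 : ℕ) + 1)
          (2 * ((updMem N (memrun N x y t) (x t) (y t)).2.2.1 : ℕ) + 2))
        = (fun t => max (2 * rmin x t + 1) (2 * rmin y t + 2)) := by
      funext t
      rw [show ((updMem N (memrun N x y t) (x t) (y t)).1 : ℕ) = rmin x t from memrun_m1 N hx t,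
          show ((updMem N (memrun N x y t) (x t) (y t)).2.2.1 : ℕ) = rmin y t from memrun_m2 N hy t]
    rw [hseq]
    exact corr_of_max (rmin_le_bound hx) (rmin_le_bound hy) (vInf_eq hx) (vInf_eq hy)
  -- (Inf, Sup)
  · refine main_generic A B _ _ N hNA hNB
      (fun m x y => max (2 * ((updMem N m x y).1 : ℕ) + 1)
                        (2 * ((updMem N m x y).2.2.2.1 : ℕ) + 2)) (2*N+4)
      (fun m x y => by have := hb1 m x y; have := hb4 m x y; omega) ?_ hsim f
    intro x y hx hy
    have hseq : (fun t => max (2 * ((updMem N (memrun N x y t) (x t) (y t)).1 : ℕ) + 1)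
          (2 * ((updMem N (memrun N x y t) (x t) (y t)).2.2.2.1 : ℕ) + 2))
        = (fun t => max (2 * rmin x t + 1) (2 * rmax y t + 2)) := by
      funext t
      rw [show ((updMem N (memrun N x y t) (x t) (y t)).1 : ℕ) = rmin x t from memrun_m1 N hx t,
          show ((updMem N (memrun N x y t) (x t) (y t)).2.2.2.1 : ℕ) = rmax y t from memrun_M2 N hy t]
    rw [hseq]
    exact corr_of_max (rmin_le_bound hx) (rmax_le_bound hy) (vInf_eq hx) (vSup_eq hy)
  -- (Inf, LimSup)
  · refine main_generic A B _ _ N hNA hNB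
      (fun m x y => max (2 * ((updMem N m x y).1 : ℕ) + 1) (2 * min y N + 2)) (2*N+4)
      (fun m x y => by have := hb1 m x y; omega) ?_ hsim f
    intro x y hx hy
    have hseq : (fun t => max (2 * ((updMem N (memrun N x y t) (x t) (y t)).1 : ℕ) + 1)
          (2 * min (y t) N + 2))
        = (fun t => max (2 * rmin x t + 1) (2 * y t + 2)) := by
      funext t
      rw [show ((updMem N (memrun N x y t) (x t) (y t)).1 : ℕ) = rmin x t from memrun_m1 N hx t,
          min_eq_left (hy t)]
    rw [hseq]
    exact corr_of_max (rmin_le_bound hx) hy (vInf_eq hx) (vLimSup_eq hy)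
  -- (Inf, LimInf): flip
  · refine main_generic A B _ _ N hNA hNB
      (fun m x y => max (2 * (N - y) + 1) (2 * (N - ((updMem N m x y).1 : ℕ)) + 2)) (2*N+4)
      (fun m x y => by omega) ?_ hsim f
    intro x y hx hy
    have hseq : (fun t => max (2 * (N - y t) + 1)
          (2 * (N - ((updMem N (memrun N x y t) (x t) (y t)).1 : ℕ)) + 2))
        = (fun t => max (2 * (N - y t) + 1) (2 * (N - rmin x t) + 2)) := by
      funext t
      rw [show ((updMem N (memrun N x y t) (x t) (y t)).1 : ℕ) = rmin x t from memrun_m1 N hx t]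
    rw [hseq]
    refine corr_of_flip (rmin_le_bound hx) hy ?_ (vLimInf_eq hy)
    rw [vInf_eq hx]
    have h' : natInf x = minIO (rmin x) := maxIO_rmin_eq hx
    exact_mod_cast h'
  -- (Sup, Inf)
  · refine main_generic A B _ _ N hNA hNB
      (fun m x y => max (2 * ((updMem N m x y).2.1 : ℕ) + 1)
                        (2 * ((updMem N m x y).2.2.1 : ℕ) + 2)) (2*N+4)
      (fun m x y => by have := hb2 m x y; have := hb3 m x y; omega) ?_ hsim f
    intro x y hx hy
    have hseq : (fun t => max (2 * ((updMem N (memrun N x y t) (x t) (y t)).2.1 : ℕ) + 1)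
          (2 * ((updMem N (memrun N x y t) (x t) (y t)).2.2.1 : ℕ) + 2))
        = (fun t => max (2 * rmax x t + 1) (2 * rmin y t + 2)) := by
      funext t
      rw [show ((updMem N (memrun N x y t) (x t) (y t)).2.1 : ℕ) = rmax x t from memrun_M1 N hx t,
          show ((updMem N (memrun N x y t) (x t) (y t)).2.2.1 : ℕ) = rmin y t from memrun_m2 N hy t]
    rw [hseq]
    exact corr_of_max (rmax_le_bound hx) (rmin_le_bound hy) (vSup_eq hx) (vInf_eq hy)
  -- (Sup, Sup)
  · refine main_generic A B _ _ N hNA hNB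
      (fun m x y => max (2 * ((updMem N m x y).2.1 : ℕ) + 1)
                        (2 * ((updMem N m x y).2.2.2.1 : ℕ) + 2)) (2*N+4)
      (fun m x y => by have := hb2 m x y; have := hb4 m x y; omega) ?_ hsim f
    intro x y hx hy
    have hseq : (fun t => max (2 * ((updMem N (memrun N x y t) (x t) (y t)).2.1 : ℕ) + 1)
          (2 * ((updMem N (memrun N x y t) (x t) (y t)).2.2.2.1 : ℕ) + 2))
        = (fun t => max (2 * rmax x t + 1) (2 * rmax y t + 2)) := by
      funext t
      rw [show ((updMem N (memrun N x y t) (x t) (y t)).2.1 : ℕ) = rmax x t from memrun_M1 N hx t,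
          show ((updMem N (memrun N x y t) (x t) (y t)).2.2.2.1 : ℕ) = rmax y t from memrun_M2 N hy t]
    rw [hseq]
    exact corr_of_max (rmax_le_bound hx) (rmax_le_bound hy) (vSup_eq hx) (vSup_eq hy)
  -- (Sup, LimSup)
  · refine main_generic A B _ _ N hNA hNB
      (fun m x y => max (2 * ((updMem N m x y).2.1 : ℕ) + 1) (2 * min y N + 2)) (2*N+4)
      (fun m x y => by have := hb2 m x y; omega) ?_ hsim f
    intro x y hx hy
    have hseq : (fun t => max (2 * ((updMem N (memrun N x y t) (x t) (y t)).2.1 : ℕ) + 1)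
          (2 * min (y t) N + 2))
        = (fun t => max (2 * rmax x t + 1) (2 * y t + 2)) := by
      funext t
      rw [show ((updMem N (memrun N x y t) (x t) (y t)).2.1 : ℕ) = rmax x t from memrun_M1 N hx t,
          min_eq_left (hy t)]
    rw [hseq]
    exact corr_of_max (rmax_le_bound hx) hy (vSup_eq hx) (vLimSup_eq hy)
  -- (Sup, LimInf): flip
  · refine main_generic A B _ _ N hNA hNB
      (fun m x y => max (2 * (N - y) + 1) (2 * (N - ((updMem N m x y).2.1 : ℕ)) + 2)) (2*N+4)
      (fun m x y => by omega) ?_ hsim f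
    intro x y hx hy
    have hseq : (fun t => max (2 * (N - y t) + 1)
          (2 * (N - ((updMem N (memrun N x y t) (x t) (y t)).2.1 : ℕ)) + 2))
        = (fun t => max (2 * (N - y t) + 1) (2 * (N - rmax x t) + 2)) := by
      funext t
      rw [show ((updMem N (memrun N x y t) (x t) (y t)).2.1 : ℕ) = rmax x t from memrun_M1 N hx t]
    rw [hseq]
    refine corr_of_flip (rmax_le_bound hx) hy ?_ (vLimInf_eq hy)
    rw [vSup_eq hx]
    have h' : natSup x = minIO (rmax x) := (minIO_rmax_eq hx).symm
    exact_mod_cast h'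
  -- (LimSup, Inf)
  · refine main_generic A B _ _ N hNA hNB
      (fun m x y => max (2 * min x N + 1) (2 * ((updMem N m x y).2.2.1 : ℕ) + 2)) (2*N+4)
      (fun m x y => by have := hb3 m x y; omega) ?_ hsim f
    intro x y hx hy
    have hseq : (fun t => max (2 * min (x t) N + 1)
          (2 * ((updMem N (memrun N x y t) (x t) (y t)).2.2.1 : ℕ) + 2))
        = (fun t => max (2 * x t + 1) (2 * rmin y t + 2)) := by
      funext t
      rw [show ((updMem N (memrun N x y t) (x t) (y t)).2.2.1 : ℕ) = rmin y t from memrun_m2 N hy t,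
          min_eq_left (hx t)]
    rw [hseq]
    exact corr_of_max hx (rmin_le_bound hy) (vLimSup_eq hx) (vInf_eq hy)
  -- (LimSup, Sup)
  · refine main_generic A B _ _ N hNA hNB
      (fun m x y => max (2 * min x N + 1) (2 * ((updMem N m x y).2.2.2.1 : ℕ) + 2)) (2*N+4)
      (fun m x y => by have := hb4 m x y; omega) ?_ hsim f
    intro x y hx hy
    have hseq : (fun t => max (2 * min (x t) N + 1)
          (2 * ((updMem N (memrun N x y t) (x t) (y t)).2.2.2.1 : ℕ) + 2))
        = (fun t => max (2 * x t + 1) (2 * rmax y t + 2)) := by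
      funext t
      rw [show ((updMem N (memrun N x y t) (x t) (y t)).2.2.2.1 : ℕ) = rmax y t from memrun_M2 N hy t,
          min_eq_left (hx t)]
    rw [hseq]
    exact corr_of_max hx (rmax_le_bound hy) (vLimSup_eq hx) (vSup_eq hy)
  -- (LimSup, LimSup)
  · refine main_generic A B _ _ N hNA hNB
      (fun m x y => max (2 * min x N + 1) (2 * min y N + 2)) (2*N+4)
      (fun m x y => by omega) ?_ hsim f
    intro x y hx hy
    have hseq : (fun t => max (2 * min (x t) N + 1) (2 * min (y t) N + 2))
        = (fun t => max (2 * x t + 1) (2 * y t + 2)) := by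
      funext t
      rw [min_eq_left (hx t), min_eq_left (hy t)]
    rw [hseq]
    exact corr_of_max hx hy (vLimSup_eq hx) (vLimSup_eq hy)
  -- (LimSup, LimInf): toggle
  · refine main_generic A B _ _ N hNA hNB
      (fun m x y => if emitT N m y then 3 else 2) (2*N+4)
      (fun m x y => by split <;> omega) ?_ hsim f
    intro x y hx hy
    have hc : (vLimInf y < vLimSup x) ↔ minIO y < maxIO x := by
      rw [vLimSup_eq hx, vLimInf_eq hy]
      exact_mod_cast Iff.rfl
    exact corr_of_toggle (fun t => emitT N (memrun N x y t) (y t)) _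
      ((toggle_bridge hx hy).trans hc.symm)
  -- (LimInf, Inf): flip
  · refine main_generic A B _ _ N hNA hNB
      (fun m x y => max (2 * (N - ((updMem N m x y).2.2.1 : ℕ)) + 1) (2 * (N - x) + 2)) (2*N+4)
      (fun m x y => by omega) ?_ hsim f
    intro x y hx hy
    have hseq : (fun t => max (2 * (N - ((updMem N (memrun N x y t) (x t) (y t)).2.2.1 : ℕ)) + 1)
          (2 * (N - x t) + 2))
        = (fun t => max (2 * (N - rmin y t) + 1) (2 * (N - x t) + 2)) := by
      funext t
      rw [show ((updMem N (memrun N x y t) (x t) (y t)).2.2.1 : ℕ) = rmin y t from memrun_m2 N hy t]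
    rw [hseq]
    refine corr_of_flip hx (rmin_le_bound hy) (vLimInf_eq hx) ?_
    rw [vInf_eq hy]
    have h' : natInf y = minIO (rmin y) := maxIO_rmin_eq hy
    exact_mod_cast h'
  -- (LimInf, Sup): flip
  · refine main_generic A B _ _ N hNA hNB
      (fun m x y => max (2 * (N - ((updMem N m x y).2.2.2.1 : ℕ)) + 1) (2 * (N - x) + 2)) (2*N+4)
      (fun m x y => by omega) ?_ hsim f
    intro x y hx hy
    have hseq : (fun t => max (2 * (N - ((updMem N (memrun N x y t) (x t) (y t)).2.2.2.1 : ℕ)) + 1)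
          (2 * (N - x t) + 2))
        = (fun t => max (2 * (N - rmax y t) + 1) (2 * (N - x t) + 2)) := by
      funext t
      rw [show ((updMem N (memrun N x y t) (x t) (y t)).2.2.2.1 : ℕ) = rmax y t from memrun_M2 N hy t]
    rw [hseq]
    refine corr_of_flip hx (rmax_le_bound hy) (vLimInf_eq hx) ?_
    rw [vSup_eq hy]
    have h' : natSup y = minIO (rmax y) := (minIO_rmax_eq hy).symm
    exact_mod_cast h'
  -- (LimInf, LimSup): reset
  · refine main_generic A B _ _ N hNA hNB
      (fun m x y => if emitR N m x y then 2 else 1) (2*N+4)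
      (fun m x y => by split <;> omega) ?_ hsim f
    intro x y hx hy
    have hc : (vLimSup y < vLimInf x) ↔ maxIO y < minIO x := by
      rw [vLimSup_eq hy, vLimInf_eq hx]
      exact_mod_cast Iff.rfl
    exact corr_of_reset (fun t => emitR N (memrun N x y t) (x t) (y t)) _
      ((reset_bridge hx hy).trans (not_congr hc).symm)
  -- (LimInf, LimInf): flip
  · refine main_generic A B _ _ N hNA hNB
      (fun m x y => max (2 * (N - y) + 1) (2 * (N - x) + 2)) (2*N+4)
      (fun m x y => by omega) ?_ hsim f
    intro x y hx hy
    exact corr_of_flip hx hy (vLimInf_eq hx) (vLimInf_eq hy)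

end Final

end

end SD

/-- Simulation implies strategic dominance: if `B` simulates `A`,
then for every resolver `f` of `A` there is a resolver `g` of `B` with
`A^f(w) ≤ B^g(w)` for all words `w`. -/
theorem simulation_implies_strategic_dominance {σ QA QB : Type} [Fintype σ]
    [Nonempty σ] [Fintype QA] [Fintype QB] (A : QAut σ QA) (B : QAut σ QB)
    (ν₁ ν₂ : (ℕ → ℕ) → ℝ) (h₁ : IsClassic ν₁) (h₂ : IsClassic ν₂)
    (hsim : QAut.Simulates ν₁ ν₂ A B) :
    ∀ f : A.Resolver, ∃ g : B.Resolver, ∀ w : ℕ → σ,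
      A.val ν₁ f w ≤ B.val ν₂ g w := by
  exact SD.simulation_implies_strategic_dominance' A B ν₁ ν₂ h₁ h₂ hsim
end
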